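/- arXiv:1612.08237 — 4 statements merged into one kernel-verified Lean document; each statement's English description precedes it below -/
import Mathlib

section
/- Let s ∈ (0,1) and let Ω ⊆ ℝ^n be an open set such that P_s(Ω) < ∞ (the s-perimeter of Ω in all of ℝ^n). Then for every measurable set E₀ ⊆ ℝ^n there exists a measurable set E ⊆ ℝ^n that is s-minimal in Ω and satisfies |(E∖Ω) Δ (E₀∖Ω)| = 0. -/
open MeasureTheory Set Filter Topology Metric Bornology
open scoped ENNReal NNReal symmDiff

noncomputable def Ls (n : ℕ) (s : ℝ) (A B : Set (EuclideanSpace ℝ (Fin n))) : ℝ≥0∞ :=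
  ∫⁻ x in A, ∫⁻ y in B, ENNReal.ofReal (dist x y ^ (-((n : ℝ) + s)))

noncomputable def Ps (n : ℕ) (s : ℝ) (E Ω : Set (EuclideanSpace ℝ (Fin n))) : ℝ≥0∞ :=
  Ls n s (E ∩ Ω) (Eᶜ ∩ Ω) + Ls n s (E ∩ Ω) (Eᶜ \ Ω) + Ls n s (E \ Ω) (Eᶜ ∩ Ω)

def SMinimal (n : ℕ) (s : ℝ) (E Ω : Set (EuclideanSpace ℝ (Fin n))) : Prop :=
  Ps n s E Ω < ⊤ ∧ ∀ F : Set (EuclideanSpace ℝ (Fin n)), MeasurableSet F →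
    volume ((F \ Ω) ∆ (E \ Ω)) = 0 → Ps n s E Ω ≤ Ps n s F Ω

/-! Direct method without compactness. `Ps · Ω` is submodular, `Ps (E ∩ F) + Ps (E ∪ F) ≤
Ps E + Ps F`, and lower semicontinuous under pointwise convergence of sets (Fatou). Among sets with
the prescribed exterior take `G k` with `Ps (G k) ≤ m + 2⁻ᵏ`, `m` the infimum: submodularity keeps
the intersections of `G j, G (j + 1), …` within `2 ^ (1 - j)` of `m`, so the lower limit
`⋃ j, ⋂ i, G (j + i)` attains `m`. The infimum is finite because the competitor `E₀ ∪ Ω` costs at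
most `Ps Ω ℝⁿ`, and a null change of the exterior data does not change `Ps`. -/

section SubmodularMinimization

variable {α : Type*}

structure IsSigmaSublattice (C : Set (Set α)) : Prop where
  inter_mem : ∀ ⦃A B⦄, A ∈ C → B ∈ C → A ∩ B ∈ C
  union_mem : ∀ ⦃A B⦄, A ∈ C → B ∈ C → A ∪ B ∈ C
  iInter_mem : ∀ ⦃G : ℕ → Set α⦄, (∀ k, G k ∈ C) → ⋂ k, G k ∈ C
  iUnion_mem : ∀ ⦃G : ℕ → Set α⦄, (∀ k, G k ∈ C) → ⋃ k, G k ∈ C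

def SubmodularOn (f : Set α → ℝ≥0∞) (C : Set (Set α)) : Prop :=
  ∀ ⦃A B⦄, A ∈ C → B ∈ C → f (A ∩ B) + f (A ∪ B) ≤ f A + f B

def PointwiseLowerSemicontinuousOn (f : Set α → ℝ≥0∞) (C : Set (Set α)) : Prop :=
  ∀ ⦃G : ℕ → Set α⦄ ⦃L : Set α⦄, (∀ k, G k ∈ C) → L ∈ C →
    (∀ x, ∀ᶠ k in atTop, (x ∈ G k ↔ x ∈ L)) → f L ≤ liminf (fun k => f (G k)) atTop

lemma Antitone.eventually_mem_iff_mem_iInter {G : ℕ → Set α} (hG : Antitone G) (x : α) :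
    ∀ᶠ k in atTop, (x ∈ G k ↔ x ∈ ⋂ k, G k) := by
  by_cases hx : x ∈ ⋂ k, G k
  · exact .of_forall fun k => iff_of_true (mem_iInter.1 hx k) hx
  · obtain ⟨k₀, hk₀⟩ : ∃ k, x ∉ G k := by simpa using hx
    exact eventually_atTop.2 ⟨k₀, fun k hk => iff_of_false (fun h => hk₀ (hG hk h)) hx⟩

lemma Monotone.eventually_mem_iff_mem_iUnion {G : ℕ → Set α} (hG : Monotone G) (x : α) :
    ∀ᶠ k in atTop, (x ∈ G k ↔ x ∈ ⋃ k, G k) := by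
  by_cases hx : x ∈ ⋃ k, G k
  · obtain ⟨k₀, hk₀⟩ := mem_iUnion.1 hx
    exact eventually_atTop.2 ⟨k₀, fun k hk => iff_of_true (hG hk hk₀) hx⟩
  · exact .of_forall fun k => iff_of_false (fun h => hx (mem_iUnion.2 ⟨k, h⟩)) hx

variable {C : Set (Set α)} {f : Set α → ℝ≥0∞} {m : ℝ≥0∞}

lemma SubmodularOn.le_add_add_of_inter (hf : SubmodularOn f C) (hm : ∀ F ∈ C, m ≤ f F)
    (hm_top : m ≠ ⊤) {A B : Set α} (hA : A ∈ C) (hB : B ∈ C) (hAB : A ∪ B ∈ C) {a b : ℝ≥0∞}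
    (hfA : f A ≤ m + a) (hfB : f B ≤ m + b) : f (A ∩ B) ≤ m + (a + b) := by
  refine (ENNReal.add_le_add_iff_right hm_top).1 ?_
  calc f (A ∩ B) + m ≤ f (A ∩ B) + f (A ∪ B) := by gcongr; exact hm _ hAB
    _ ≤ f A + f B := hf hA hB
    _ ≤ (m + a) + (m + b) := add_le_add hfA hfB
    _ = (m + (a + b)) + m := by ring

lemma SubmodularOn.biInter_le_add_sum (hC : IsSigmaSublattice C) (hf : SubmodularOn f C)
    (hm : ∀ F ∈ C, m ≤ f F) (hm_top : m ≠ ⊤) {G : ℕ → Set α} (hG : ∀ k, G k ∈ C)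
    {ε : ℕ → ℝ≥0∞} (hGε : ∀ k, f (G k) ≤ m + ε k) (k : ℕ) :
    ⋂ i ≤ k, G i ∈ C ∧ f (⋂ i ≤ k, G i) ≤ m + ∑ i ∈ Finset.range (k + 1), ε i := by
  induction k with
  | zero => simpa using ⟨hG 0, hGε 0⟩
  | succ k ih =>
    rw [biInter_le_succ, Finset.sum_range_succ]
    exact ⟨hC.inter_mem ih.1 (hG _),
      hf.le_add_add_of_inter hm hm_top ih.1 (hG _) (hC.union_mem ih.1 (hG _)) ih.2 (hGε _)⟩

lemma SubmodularOn.iInter_le_add_tsum (hC : IsSigmaSublattice C) (hf : SubmodularOn f C)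
    (hlsc : PointwiseLowerSemicontinuousOn f C) (hm : ∀ F ∈ C, m ≤ f F) (hm_top : m ≠ ⊤)
    {G : ℕ → Set α} (hG : ∀ k, G k ∈ C) {ε : ℕ → ℝ≥0∞} (hGε : ∀ k, f (G k) ≤ m + ε k) :
    f (⋂ i, G i) ≤ m + ∑' i, ε i := by
  have hD := hf.biInter_le_add_sum hC hm hm_top hG hGε
  have hanti : Antitone fun k => ⋂ i ≤ k, G i := fun j k hjk x hx =>
    mem_iInter₂.2 fun i hi => mem_iInter₂.1 hx i (hi.trans hjk)
  rw [← biInter_le_eq_iInter]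
  refine (hlsc (fun k => (hD k).1) (hC.iInter_mem fun k => (hD k).1)
    hanti.eventually_mem_iff_mem_iInter).trans ?_
  exact liminf_le_of_frequently_le' (.of_forall fun k =>
    (hD k).2.trans (by gcongr; exact ENNReal.sum_le_tsum _))

lemma SubmodularOn.iInter_tail_le (hC : IsSigmaSublattice C) (hf : SubmodularOn f C)
    (hlsc : PointwiseLowerSemicontinuousOn f C) (hm : ∀ F ∈ C, m ≤ f F) (hm_top : m ≠ ⊤)
    {G : ℕ → Set α} (hG : ∀ k, G k ∈ C) (hGm : ∀ k, f (G k) ≤ m + 2⁻¹ ^ k) (j : ℕ) :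
    f (⋂ i, G (j + i)) ≤ m + 2⁻¹ ^ j * 2 := by
  have hsum : ∑' i, (2⁻¹ : ℝ≥0∞) ^ (j + i) = 2⁻¹ ^ j * 2 := by
    simp_rw [pow_add, ENNReal.tsum_mul_left, ENNReal.tsum_geometric, ENNReal.one_sub_inv_two,
      inv_inv]
  rw [← hsum]
  exact hf.iInter_le_add_tsum hC hlsc hm hm_top (fun i => hG _) fun i => hGm _

theorem SubmodularOn.exists_isMinOn (hC : IsSigmaSublattice C) (hf : SubmodularOn f C)
    (hlsc : PointwiseLowerSemicontinuousOn f C) (hne : C.Nonempty) : ∃ E ∈ C, IsMinOn f C E := by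
  set m := ⨅ F ∈ C, f F
  have hm : ∀ F ∈ C, m ≤ f F := fun F hF => iInf₂_le F hF
  by_cases hm_top : m = ⊤
  · obtain ⟨E, hE⟩ := hne
    exact ⟨E, hE, isMinOn_iff.2 fun F hF => le_top.trans (hm_top ▸ hm F hF)⟩
  have hG : ∀ k : ℕ, ∃ G ∈ C, f G ≤ m + 2⁻¹ ^ k := fun k => by
    have : m < m + 2⁻¹ ^ k := ENNReal.lt_add_right hm_top (by simp)
    obtain ⟨G, hG⟩ := iInf_lt_iff.1 this
    obtain ⟨hGC, hGm⟩ := iInf_lt_iff.1 hG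
    exact ⟨G, hGC, hGm.le⟩
  choose G hGC hGm using hG
  set H : ℕ → Set α := fun j => ⋂ i, G (j + i)
  have hHC : ∀ j, H j ∈ C := fun j => hC.iInter_mem fun i => hGC _
  have hHmono : Monotone H := fun j k hjk x hx => mem_iInter.2 fun i => by
    simpa only [show j + (k - j + i) = k + i by omega] using mem_iInter.1 hx (k - j + i)
  have hlim : Tendsto (fun j : ℕ => m + 2⁻¹ ^ j * 2) atTop (𝓝 m) := by
    have h2 := ENNReal.tendsto_pow_atTop_nhds_zero_of_lt_one (r := 2⁻¹) (by norm_num)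
    simpa using (ENNReal.Tendsto.mul_const h2 (Or.inr ENNReal.ofNat_ne_top)).const_add m
  have hE : f (⋃ j, H j) ≤ m := by
    refine (hlsc hHC (hC.iUnion_mem hHC) hHmono.eventually_mem_iff_mem_iUnion).trans ?_
    rw [← hlim.liminf_eq]
    exact liminf_le_liminf (.of_forall (hf.iInter_tail_le hC hlsc hm hm_top hGC hGm))
  exact ⟨⋃ j, H j, hC.iUnion_mem hHC, isMinOn_iff.2 fun F hF => hE.trans (hm F hF)⟩

end SubmodularMinimization

section FractionalPerimeter

variable {n : ℕ} {s : ℝ}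

noncomputable def sKernel (n : ℕ) (s : ℝ)
    (p : EuclideanSpace ℝ (Fin n) × EuclideanSpace ℝ (Fin n)) : ℝ≥0∞ :=
  ENNReal.ofReal (dist p.1 p.2 ^ (-((n : ℝ) + s)))

lemma measurable_sKernel : Measurable (sKernel n s) :=
  ENNReal.measurable_ofReal.comp ((measurable_fst.dist measurable_snd).pow measurable_const)

lemma Ls_eq_setLIntegral_prod (A B : Set (EuclideanSpace ℝ (Fin n))) :
    Ls n s A B = ∫⁻ p in A ×ˢ B, sKernel n s p := by
  rw [Ls, Measure.volume_eq_prod, ← Measure.prod_restrict,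
    lintegral_prod _ measurable_sKernel.aemeasurable]
  rfl

def interactionSet {X : Type*} (Ω E : Set X) : Set (X × X) :=
  {p | p.1 ∈ E ∧ p.2 ∉ E ∧ (p.1 ∈ Ω ∨ p.2 ∈ Ω)}

lemma mem_interactionSet {X : Type*} {Ω E : Set X} {p : X × X} :
    p ∈ interactionSet Ω E ↔ p.1 ∈ E ∧ p.2 ∉ E ∧ (p.1 ∈ Ω ∨ p.2 ∈ Ω) := Iff.rfl

lemma interactionSet_eq_union {X : Type*} (Ω E : Set X) :
    interactionSet Ω E =
      (E ∩ Ω) ×ˢ (Eᶜ ∩ Ω) ∪ (E ∩ Ω) ×ˢ (Eᶜ \ Ω) ∪ (E \ Ω) ×ˢ (Eᶜ ∩ Ω) := by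
  ext p
  simp only [mem_interactionSet, mem_union, mem_prod, mem_inter_iff, Set.mem_sdiff,
    mem_compl_iff]
  tauto

lemma measurableSet_interactionSet {X : Type*} [MeasurableSpace X] {Ω E : Set X}
    (hΩ : MeasurableSet Ω) (hE : MeasurableSet E) : MeasurableSet (interactionSet Ω E) := by
  rw [interactionSet_eq_union]
  exact (((hE.inter hΩ).prod (hE.compl.inter hΩ)).union
    ((hE.inter hΩ).prod (hE.compl.diff hΩ))).union ((hE.diff hΩ).prod (hE.compl.inter hΩ))

lemma Ps_eq_lintegral_indicator {Ω E : Set (EuclideanSpace ℝ (Fin n))} (hΩ : MeasurableSet Ω)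
    (hE : MeasurableSet E) :
    Ps n s E Ω = ∫⁻ p, (interactionSet Ω E).indicator (sKernel n s) p := by
  rw [lintegral_indicator (measurableSet_interactionSet hΩ hE), interactionSet_eq_union,
    lintegral_union ((hE.diff hΩ).prod (hE.compl.inter hΩ)),
    lintegral_union ((hE.inter hΩ).prod (hE.compl.diff hΩ)), Ps, Ls_eq_setLIntegral_prod,
    Ls_eq_setLIntegral_prod, Ls_eq_setLIntegral_prod]
  · exact disjoint_left.2 fun p h₁ h₂ => h₂.2.2 h₁.2.2
  · exact disjoint_left.2 fun p h₁ h₂ => h₂.1.2 (h₁.elim (·.1.2) (·.1.2))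

lemma indicator_interactionSet_inter_add_union_le {X : Type*} (Ω E F : Set X)
    (k : X × X → ℝ≥0∞) (p : X × X) :
    (interactionSet Ω (E ∩ F)).indicator k p + (interactionSet Ω (E ∪ F)).indicator k p ≤
      (interactionSet Ω E).indicator k p + (interactionSet Ω F).indicator k p := by
  by_cases hΩ : p.1 ∈ Ω ∨ p.2 ∈ Ω
  · by_cases h₁ : p.1 ∈ E <;> by_cases h₂ : p.2 ∈ E <;> by_cases h₃ : p.1 ∈ F <;>
      by_cases h₄ : p.2 ∈ F <;> simp [mem_interactionSet, h₁, h₂, h₃, h₄, hΩ]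
  · simp [mem_interactionSet, hΩ]

lemma Ps_inter_add_Ps_union_le {Ω E F : Set (EuclideanSpace ℝ (Fin n))} (hΩ : MeasurableSet Ω)
    (hE : MeasurableSet E) (hF : MeasurableSet F) :
    Ps n s (E ∩ F) Ω + Ps n s (E ∪ F) Ω ≤ Ps n s E Ω + Ps n s F Ω := by
  rw [Ps_eq_lintegral_indicator hΩ (hE.inter hF), Ps_eq_lintegral_indicator hΩ (hE.union hF),
    Ps_eq_lintegral_indicator hΩ hE, Ps_eq_lintegral_indicator hΩ hF,
    ← lintegral_add_left (measurable_sKernel.indicator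
      (measurableSet_interactionSet hΩ (hE.inter hF))),
    ← lintegral_add_left (measurable_sKernel.indicator (measurableSet_interactionSet hΩ hE))]
  exact lintegral_mono (indicator_interactionSet_inter_add_union_le Ω E F _)

lemma indicator_interactionSet_congr {X : Type*} {Ω E F : Set X} (k : X × X → ℝ≥0∞) {p : X × X}
    (h₁ : p.1 ∈ E ↔ p.1 ∈ F) (h₂ : p.2 ∈ E ↔ p.2 ∈ F) :
    (interactionSet Ω E).indicator k p = (interactionSet Ω F).indicator k p := by
  have hp : p ∈ interactionSet Ω E ↔ p ∈ interactionSet Ω F := by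
    rw [mem_interactionSet, mem_interactionSet, h₁, h₂]
  by_cases h : p ∈ interactionSet Ω E
  · rw [indicator_of_mem h, indicator_of_mem (hp.1 h)]
  · rw [indicator_of_notMem h, indicator_of_notMem (mt hp.2 h)]

lemma Ps_le_liminf {Ω L : Set (EuclideanSpace ℝ (Fin n))} {G : ℕ → Set (EuclideanSpace ℝ (Fin n))}
    (hΩ : MeasurableSet Ω) (hG : ∀ k, MeasurableSet (G k)) (hL : MeasurableSet L)
    (hGL : ∀ x, ∀ᶠ k in atTop, (x ∈ G k ↔ x ∈ L)) :
    Ps n s L Ω ≤ liminf (fun k => Ps n s (G k) Ω) atTop := by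
  have hlim : ∀ p, (interactionSet Ω L).indicator (sKernel n s) p =
      liminf (fun k => (interactionSet Ω (G k)).indicator (sKernel n s) p) atTop := fun p => by
    refine (liminf_congr ?_).trans (liminf_const _) |>.symm
    filter_upwards [hGL p.1, hGL p.2] with k h₁ h₂
    exact indicator_interactionSet_congr _ h₁ h₂
  simp_rw [Ps_eq_lintegral_indicator hΩ hL, hlim, Ps_eq_lintegral_indicator hΩ (hG _)]
  exact lintegral_liminf_le fun k =>
    measurable_sKernel.indicator (measurableSet_interactionSet hΩ (hG k))

lemma Ps_congr_ae {Ω E F : Set (EuclideanSpace ℝ (Fin n))} (hΩ : MeasurableSet Ω)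
    (hE : MeasurableSet E) (hF : MeasurableSet F) (hEF : E =ᵐ[volume] F) :
    Ps n s E Ω = Ps n s F Ω := by
  rw [Ps_eq_lintegral_indicator hΩ hE, Ps_eq_lintegral_indicator hΩ hF]
  rw [eventuallyEq_set] at hEF
  refine lintegral_congr_ae ?_
  rw [Measure.volume_eq_prod]
  filter_upwards [Measure.quasiMeasurePreserving_fst.ae hEF,
    Measure.quasiMeasurePreserving_snd.ae hEF] with p hp₁ hp₂
  exact indicator_interactionSet_congr _ hp₁ hp₂

lemma Ps_le_Ps_univ_of_subset {Ω E : Set (EuclideanSpace ℝ (Fin n))} (hΩE : Ω ⊆ E) :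
    Ps n s E Ω ≤ Ps n s Ω univ := by
  have hE : E ∩ Ω = Ω := inter_eq_self_of_subset_right hΩE
  have hEc : Eᶜ ∩ Ω = ∅ := disjoint_iff_inter_eq_empty.1 (disjoint_compl_left.mono_right hΩE)
  calc Ps n s E Ω = Ls n s Ω (Eᶜ \ Ω) := by simp [Ps, hE, hEc, Ls]
    _ ≤ Ls n s Ω Ωᶜ := lintegral_mono fun _ => lintegral_mono_set fun _ hx => hx.2
    _ = Ps n s Ω univ := by simp [Ps, Ls]

end FractionalPerimeter

lemma isSigmaSublattice_measurableSet_sdiff_eq {α : Type*} [MeasurableSpace α] (Ω X : Set α) :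
    IsSigmaSublattice {F : Set α | MeasurableSet F ∧ F \ Ω = X} where
  inter_mem A B hA hB :=
    ⟨hA.1.inter hB.1, by rw [sdiff_inter_distrib_right, hA.2, hB.2, inter_self]⟩
  union_mem A B hA hB := ⟨hA.1.union hB.1, by rw [union_sdiff_distrib, hA.2, hB.2, union_self]⟩
  iInter_mem G hG := ⟨.iInter fun k => (hG k).1, by
    rw [sdiff_eq, iInter_inter]
    simp_rw [← sdiff_eq, fun k => (hG k).2, iInter_const]⟩
  iUnion_mem G hG := ⟨.iUnion fun k => (hG k).1, by
    simp_rw [iUnion_sdiff, fun k => (hG k).2, iUnion_const]⟩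

lemma SMinimal.of_isMinOn {n : ℕ} {s : ℝ} {Ω E : Set (EuclideanSpace ℝ (Fin n))}
    (hΩ : MeasurableSet Ω) (hE : MeasurableSet E)
    (hmin : IsMinOn (Ps n s · Ω) {F | MeasurableSet F ∧ F \ Ω = E \ Ω} E) (hfin : Ps n s E Ω < ⊤) :
    SMinimal n s E Ω := by
  refine ⟨hfin, fun F hF hFE => ?_⟩
  set F' := F ∩ Ω ∪ E \ Ω
  have hF' : MeasurableSet F' ∧ F' \ Ω = E \ Ω := by
    refine ⟨(hF.inter hΩ).union (hE.diff hΩ), ?_⟩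
    rw [union_sdiff_distrib, sdiff_idem, Set.sdiff_eq_empty.2 inter_subset_right, empty_union]
  have hFF' : F =ᵐ[volume] F' := by
    refine measure_symmDiff_eq_zero_iff.1 (measure_mono_null (fun x hx => ?_) hFE)
    simp only [F', mem_symmDiff, mem_union, mem_inter_iff, Set.mem_sdiff] at hx ⊢
    tauto
  rw [Ps_congr_ae hΩ hF hF'.1 hFF']
  exact isMinOn_iff.1 hmin F' hF'

theorem exists_sMinimal_of_finite_perimeter_domain_general
    (n : ℕ) (s : ℝ)
    (Ω : Set (EuclideanSpace ℝ (Fin n))) (hΩ : IsOpen Ω)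
    (hΩper : Ps n s Ω Set.univ < ⊤)
    (E₀ : Set (EuclideanSpace ℝ (Fin n))) (hE₀ : MeasurableSet E₀) :
    ∃ E : Set (EuclideanSpace ℝ (Fin n)), MeasurableSet E ∧
      SMinimal n s E Ω ∧ volume ((E \ Ω) ∆ (E₀ \ Ω)) = 0 := by
  have hΩm := hΩ.measurableSet
  obtain ⟨E, ⟨hEm, hEX⟩, hmin⟩ := SubmodularOn.exists_isMinOn (f := (Ps n s · Ω))
    (isSigmaSublattice_measurableSet_sdiff_eq Ω (E₀ \ Ω))
    (fun A B hA hB => Ps_inter_add_Ps_union_le hΩm hA.1 hB.1)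
    (fun G L hG hL hGL => Ps_le_liminf hΩm (fun k => (hG k).1) hL.1 hGL) ⟨E₀, hE₀, rfl⟩
  have hfin : Ps n s E Ω < ⊤ :=
    (isMinOn_iff.1 hmin _ ⟨hE₀.union hΩm, union_sdiff_right⟩).trans_lt
      ((Ps_le_Ps_univ_of_subset subset_union_right).trans_lt hΩper)
  rw [← hEX] at hmin
  refine ⟨E, hEm, .of_isMinOn hΩm hEm hmin hfin, ?_⟩
  rw [hEX, symmDiff_self, bot_eq_empty, measure_empty]

/-- Corollary 1.9: if `Ω` is an open set with finite global `s`-perimeter,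
then for every exterior data there exists an `s`-minimal set in `Ω`. -/
theorem exists_sMinimal_of_finite_perimeter_domain
    (n : ℕ) (hn : 1 ≤ n) (s : ℝ) (hs : s ∈ Set.Ioo (0 : ℝ) 1)
    (Ω : Set (EuclideanSpace ℝ (Fin n))) (hΩ : IsOpen Ω)
    (hΩper : Ps n s Ω Set.univ < ⊤)
    (E₀ : Set (EuclideanSpace ℝ (Fin n))) (hE₀ : MeasurableSet E₀) :
    ∃ E : Set (EuclideanSpace ℝ (Fin n)), MeasurableSet E ∧
      SMinimal n s E Ω ∧ volume ((E \ Ω) ∆ (E₀ \ Ω)) = 0 :=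
  exists_sMinimal_of_finite_perimeter_domain_general n s Ω hΩ hΩper E₀ hE₀
end

section
/- Let Ω ⊆ ℝ^n be a bounded open set, s ∈ (0,1), and let E ⊆ ℝ^{n+1} be measurable. Suppose that for some k ∈ ℕ one has Ω×(−∞,−k] ⊆ E ∩ Ω^∞ ⊆ Ω×(−∞,k] (up to null sets) and P_s(E, Ω^{k+1}) < ∞, where Ω^{k+1} := Ω×(−k−1,k+1). Then the local part of the s-perimeter in the infinite cylinder is finite: P_s^L(E, Ω^∞) < ∞. -/
open MeasureTheory Set Filter Topology Metric Bornology
open scoped ENNReal NNReal symmDiff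

/-- Projection of a point of `ℝ^{n+1}` onto its first `n` coordinates. -/
def projT {n : ℕ} (X : EuclideanSpace ℝ (Fin (n + 1))) : EuclideanSpace ℝ (Fin n) :=
  WithLp.toLp 2 (fun i => X (Fin.castSucc i))

/-- The last ("vertical") coordinate of a point of `ℝ^{n+1}`. -/
def lastCoord {n : ℕ} (X : EuclideanSpace ℝ (Fin (n + 1))) : ℝ := X (Fin.last n)

/-- The generalized cylinder `Ω × I ⊆ ℝ^{n+1}`. -/
def cylinder {n : ℕ} (Ω : Set (EuclideanSpace ℝ (Fin n))) (I : Set ℝ) :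
    Set (EuclideanSpace ℝ (Fin (n + 1))) :=
  {X | projT X ∈ Ω ∧ lastCoord X ∈ I}

/-- The local part of the fractional `s`-perimeter. -/
noncomputable def PsL (n : ℕ) (s : ℝ) (E Ω : Set (EuclideanSpace ℝ (Fin n))) : ℝ≥0∞ :=
  Ls n s (E ∩ Ω) (Eᶜ ∩ Ω)

/-!
Outside the truncated cylinder `Ω^{k+1}`, the hypotheses put `E ∩ Ω^∞` (up to a null set) below
height `-(k+1)` and its complement in `Ω^∞` above height `k+1`. Hence `P_s^L(E, Ω^∞)` is at most
`P_s(E, Ω^{k+1})` plus the interaction of the half-cylinders `Ω × (-∞, -(k+1)]` and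
`Ω × [k+1, ∞)`. That interaction is finite: writing `n + 1 + s = 2q` with `q > 1` (this is where
`n + s > 1` enters), the kernel at points with heights `u ≤ a < b ≤ t` is at most
`(t - a)^{-q} (b - u)^{-q}`, a product of functions integrable over the two half-cylinders
since `Ω` has finite measure.
-/

section Ls

variable {N : ℕ} {s : ℝ}

lemma Ls_mono_ae {A A' B B' : Set (EuclideanSpace ℝ (Fin N))}
    (hA : A ≤ᵐ[volume] A') (hB : B ≤ᵐ[volume] B') : Ls N s A B ≤ Ls N s A' B' :=
  (lintegral_mono' (Measure.restrict_mono_ae hA) le_rfl).trans <|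
    lintegral_mono fun _ => lintegral_mono' (Measure.restrict_mono_ae hB) le_rfl

lemma Ls_mono {A A' B B' : Set (EuclideanSpace ℝ (Fin N))} (hA : A ⊆ A') (hB : B ⊆ B') :
    Ls N s A B ≤ Ls N s A' B' :=
  Ls_mono_ae hA.eventuallyLE hB.eventuallyLE

lemma Ls_union_left_le (A₁ A₂ B : Set (EuclideanSpace ℝ (Fin N))) :
    Ls N s (A₁ ∪ A₂) B ≤ Ls N s A₁ B + Ls N s A₂ B :=
  lintegral_union_le _ _ _

lemma Ls_union_right_le (A B₁ B₂ : Set (EuclideanSpace ℝ (Fin N))) :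
    Ls N s A (B₁ ∪ B₂) ≤ Ls N s A B₁ + Ls N s A B₂ := by
  have hker : Measurable fun z : EuclideanSpace ℝ (Fin N) × EuclideanSpace ℝ (Fin N) =>
      ENNReal.ofReal (dist z.1 z.2 ^ (-((N : ℝ) + s))) := by fun_prop
  exact (lintegral_mono fun _ => lintegral_union_le _ _ _).trans_eq <|
    lintegral_add_left' hker.lintegral_prod_right'.aemeasurable _

lemma Ls_le_Ps_add_Ls_diff {E O A B : Set (EuclideanSpace ℝ (Fin N))}
    (hA : A ⊆ E) (hB : B ⊆ Eᶜ) : Ls N s A B ≤ Ps N s E O + Ls N s (A \ O) (B \ O) := by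
  have split_right (X) : Ls N s X B ≤ Ls N s X (B ∩ O) + Ls N s X (B \ O) := by
    simpa only [inter_union_sdiff] using Ls_union_right_le X (B ∩ O) (B \ O)
  calc Ls N s A B ≤ Ls N s (A ∩ O) B + Ls N s (A \ O) B := by
        simpa only [inter_union_sdiff] using Ls_union_left_le (N := N) (s := s) (A ∩ O) (A \ O) B
    _ ≤ (Ls N s (A ∩ O) (B ∩ O) + Ls N s (A ∩ O) (B \ O)) +
          (Ls N s (A \ O) (B ∩ O) + Ls N s (A \ O) (B \ O)) :=
        add_le_add (split_right _) (split_right _)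
    _ ≤ (Ls N s (E ∩ O) (Eᶜ ∩ O) + Ls N s (E ∩ O) (Eᶜ \ O)) +
          (Ls N s (E \ O) (Eᶜ ∩ O) + Ls N s (A \ O) (B \ O)) := by
        gcongr ?_ + ?_ + (?_ + _) <;> apply Ls_mono <;> gcongr
    _ = Ps N s E O + Ls N s (A \ O) (B \ O) := by rw [Ps, add_assoc, add_assoc, add_assoc]

end Ls

@[fun_prop]
lemma measurable_lastCoord {n : ℕ} : Measurable (lastCoord : EuclideanSpace ℝ (Fin (n + 1)) → ℝ) :=
  (measurable_pi_apply _).comp (WithLp.measurable_ofLp _ _)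

lemma lastCoord_sub_le_dist {n : ℕ} (x y : EuclideanSpace ℝ (Fin (n + 1))) :
    lastCoord y - lastCoord x ≤ dist x y :=
  calc lastCoord y - lastCoord x ≤ dist (y (Fin.last n)) (x (Fin.last n)) :=
        (le_abs_self _).trans (Real.dist_eq _ _).ge
    _ ≤ dist x y := (PiLp.dist_apply_le y x _).trans_eq (dist_comm y x)

section CylinderGeometry

variable {n : ℕ} {Ω : Set (EuclideanSpace ℝ (Fin n))}
  {μ : Measure (EuclideanSpace ℝ (Fin (n + 1)))}

lemma cylinder_mono {I J : Set ℝ} (h : I ⊆ J) : cylinder Ω I ⊆ cylinder Ω J :=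
  fun _ hX => ⟨hX.1, h hX.2⟩

lemma cylinder_diff (I J : Set ℝ) : cylinder Ω I \ cylinder Ω J = cylinder Ω (I \ J) := by
  ext X
  simp only [_root_.cylinder, Set.mem_sdiff, mem_ofPred_eq]
  tauto

lemma diff_cylinder_Ioo_ae_le_Iic {A : Set (EuclideanSpace ℝ (Fin (n + 1)))} {a b c : ℝ}
    (hA : A ≤ᵐ[μ] cylinder Ω (Iic c)) (hcb : c < b) :
    A \ cylinder Ω (Ioo a b) ≤ᵐ[μ] cylinder Ω (Iic a) := by
  refine (hA.diff EventuallyLE.rfl).trans (LE.le.eventuallyLE ?_)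
  rw [cylinder_diff]
  exact cylinder_mono fun t ⟨ht, hO⟩ => by simp only [mem_Iic, mem_Ioo] at *; grind

lemma compl_inter_diff_cylinder_Ioo_ae_le_Ici {E : Set (EuclideanSpace ℝ (Fin (n + 1)))}
    {a b c : ℝ} (hE : cylinder Ω (Iic c) ≤ᵐ[μ] E) (hac : a ≤ c) :
    ((Eᶜ ∩ cylinder Ω Set.univ) \ cylinder Ω (Ioo a b) : Set _) ≤ᵐ[μ] cylinder Ω (Ici b) := by
  have hsub : Eᶜ ∩ cylinder Ω Set.univ ⊆ cylinder Ω Set.univ \ E :=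
    fun X ⟨hXE, hX⟩ => ⟨hX, hXE⟩
  refine ((hsub.eventuallyLE.trans (EventuallyLE.rfl.diff hE)).diff EventuallyLE.rfl).trans
    (LE.le.eventuallyLE ?_)
  rw [cylinder_diff, cylinder_diff]
  exact cylinder_mono fun t ⟨⟨_, ht⟩, hO⟩ => by simp only [mem_Iic, mem_Ioo, mem_Ici] at *; grind

end CylinderGeometry

def lastCoordProjT (n : ℕ) : EuclideanSpace ℝ (Fin (n + 1)) ≃ᵐ ℝ × EuclideanSpace ℝ (Fin n) :=
  (MeasurableEquiv.toLp 2 _).symm.trans <|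
    (MeasurableEquiv.piFinSuccAbove (fun _ => ℝ) (Fin.last n)).trans <|
      MeasurableEquiv.prodCongr (MeasurableEquiv.refl ℝ) (MeasurableEquiv.toLp 2 _)

lemma lastCoordProjT_apply {n : ℕ} (X : EuclideanSpace ℝ (Fin (n + 1))) :
    lastCoordProjT n X = (lastCoord X, projT X) := by
  ext i
  · rfl
  · show X ((Fin.last n).succAbove i) = X i.castSucc
    rw [Fin.succAbove_last]

lemma measurePreserving_lastCoordProjT (n : ℕ) :
    MeasurePreserving (lastCoordProjT n) volume (volume.prod volume) := by
  refine (PiLp.volume_preserving_ofLp _).trans ?_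
  refine MeasurePreserving.trans ?_ ((MeasurePreserving.id volume).prod
    (PiLp.volume_preserving_toLp _))
  simpa only [volume_pi] using
    measurePreserving_piFinSuccAbove (fun _ : Fin (n + 1) => (volume : Measure ℝ)) (Fin.last n)

lemma cylinder_eq_preimage {n : ℕ} (Ω : Set (EuclideanSpace ℝ (Fin n))) (I : Set ℝ) :
    cylinder Ω I = lastCoordProjT n ⁻¹' (I ×ˢ Ω) := by
  ext X
  simp [_root_.cylinder, lastCoordProjT_apply, and_comm]

lemma setLIntegral_cylinder_lastCoord {n : ℕ} (Ω : Set (EuclideanSpace ℝ (Fin n))) (I : Set ℝ)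
    {h : ℝ → ℝ≥0∞} (hh : Measurable h) :
    ∫⁻ X in cylinder Ω I, h (lastCoord X) = (∫⁻ t in I, h t) * volume Ω := by
  rw [cylinder_eq_preimage]
  calc ∫⁻ X in lastCoordProjT n ⁻¹' (I ×ˢ Ω), h (lastCoord X)
      = ∫⁻ z in I ×ˢ Ω, h z.1 ∂(volume.prod volume) := by
        simpa only [lastCoordProjT_apply] using
          (measurePreserving_lastCoordProjT n).setLIntegral_comp_preimage_emb
            (lastCoordProjT n).measurableEmbedding (fun z => h z.1) (I ×ˢ Ω)
    _ = (∫⁻ t in I, h t) * volume Ω := by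
        rw [setLIntegral_prod _ (by fun_prop)]
        simp only [setLIntegral_const]
        exact lintegral_mul_const _ hh

lemma integrableOn_Ici_rpow_sub {a b q : ℝ} (hab : a < b) (hq : 1 < q) :
    IntegrableOn (fun t => (t - a) ^ (-q)) (Ici b) := by
  rw [integrableOn_Ici_iff_integrableOn_Ioi]
  have h := integrableOn_Ioi_rpow_of_lt (a := -q) (by linarith) (sub_pos.2 hab)
  rw [← (measurePreserving_sub_right volume a).integrableOn_comp_preimage
    (measurableEmbedding_subRight a)] at h
  have hpre : (· - a) ⁻¹' Ioi (b - a) = Ioi b := by ext; simp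
  rwa [hpre] at h

lemma integrableOn_Iic_rpow_sub {a b q : ℝ} (hab : a < b) (hq : 1 < q) :
    IntegrableOn (fun u => (b - u) ^ (-q)) (Iic a) := by
  rw [integrableOn_Iic_iff_integrableOn_Iio]
  have h := integrableOn_Ioi_rpow_of_lt (a := -q) (by linarith) (sub_pos.2 hab)
  rw [← (Measure.measurePreserving_sub_left volume b).integrableOn_comp_preimage
    (measurableEmbedding_subLeft b)] at h
  have hpre : (b - ·) ⁻¹' Ioi (b - a) = Iio a := by ext; simp
  rwa [hpre] at h

lemma dist_rpow_neg_two_mul_le {n : ℕ} {a b q : ℝ} (hab : a < b) (hq : 0 ≤ q)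
    {x y : EuclideanSpace ℝ (Fin (n + 1))} (hx : lastCoord x ≤ a) (hy : b ≤ lastCoord y) :
    dist x y ^ (-(2 * q)) ≤ (lastCoord y - a) ^ (-q) * (b - lastCoord x) ^ (-q) := by
  set d := lastCoord y - lastCoord x
  have hd : 0 < d := by linarith
  calc dist x y ^ (-(2 * q)) ≤ d ^ (-(2 * q)) :=
        Real.rpow_le_rpow_of_nonpos hd (lastCoord_sub_le_dist x y) (by linarith)
    _ = d ^ (-q) * d ^ (-q) := by rw [← Real.rpow_add hd]; ring_nf
    _ ≤ (lastCoord y - a) ^ (-q) * (b - lastCoord x) ^ (-q) :=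
        mul_le_mul (Real.rpow_le_rpow_of_nonpos (by linarith) (by linarith) (by linarith))
          (Real.rpow_le_rpow_of_nonpos (by linarith) (by linarith) (by linarith))
          (by positivity) (Real.rpow_nonneg (by linarith) _)

/-- Splitting the kernel exponent `n + 1 + s = q + q` with `q > 1` bounds the kernel by a product
of two functions of the last coordinates, each integrable on its half-cylinder. -/
lemma Ls_cylinder_Iic_Ici_lt_top {n : ℕ} {s : ℝ} (hns : 1 < n + s)
    {Ω : Set (EuclideanSpace ℝ (Fin n))} (hΩ : volume Ω ≠ ⊤) {a b : ℝ} (hab : a < b) :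
    Ls (n + 1) s (cylinder Ω (Iic a)) (cylinder Ω (Ici b)) < ⊤ := by
  set q := ((n : ℝ) + 1 + s) / 2 with hq_def
  have hq : 1 < q := by linarith
  have hexp : -(((n + 1 : ℕ) : ℝ) + s) = -(2 * q) := by push_cast; linarith
  calc Ls (n + 1) s (cylinder Ω (Iic a)) (cylinder Ω (Ici b))
      ≤ ∫⁻ x in cylinder Ω (Iic a),
          (∫⁻ y in cylinder Ω (Ici b), ENNReal.ofReal ((lastCoord y - a) ^ (-q))) *
            ENNReal.ofReal ((b - lastCoord x) ^ (-q)) := by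
        refine setLIntegral_mono (by fun_prop) fun x hx => ?_
        rw [← lintegral_mul_const' _ _ ENNReal.ofReal_ne_top]
        refine setLIntegral_mono (by fun_prop) fun y hy => ?_
        have hy' : b ≤ lastCoord y := hy.2
        rw [hexp, ← ENNReal.ofReal_mul (Real.rpow_nonneg (by linarith) _)]
        exact ENNReal.ofReal_le_ofReal (dist_rpow_neg_two_mul_le hab (by linarith) hx.2 hy.2)
    _ = ((∫⁻ t in Ici b, ENNReal.ofReal ((t - a) ^ (-q))) * volume Ω) *
          ((∫⁻ u in Iic a, ENNReal.ofReal ((b - u) ^ (-q))) * volume Ω) := by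
        rw [lintegral_const_mul _ (by fun_prop),
          setLIntegral_cylinder_lastCoord _ _ (h := fun t => ENNReal.ofReal ((t - a) ^ (-q)))
            (by fun_prop),
          setLIntegral_cylinder_lastCoord _ _ (h := fun u => ENNReal.ofReal ((b - u) ^ (-q)))
            (by fun_prop)]
    _ < ⊤ := by
        have hT := (integrableOn_Ici_rpow_sub hab hq).setLIntegral_lt_top
        have hS := (integrableOn_Iic_rpow_sub hab hq).setLIntegral_lt_top
        finiteness

theorem local_part_finite_in_cylinder_general
    (n : ℕ) (hn : 1 ≤ n) (s : ℝ) (hs : s ∈ Set.Ioo (0 : ℝ) 1)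
    (Ω : Set (EuclideanSpace ℝ (Fin n))) (hΩb : IsBounded Ω)
    (E : Set (EuclideanSpace ℝ (Fin (n + 1))))
    (k : ℕ)
    (hlow : volume (cylinder Ω (Set.Iic (-(k : ℝ))) \ (E ∩ cylinder Ω Set.univ)) = 0)
    (hup : volume ((E ∩ cylinder Ω Set.univ) \ cylinder Ω (Set.Iic (k : ℝ))) = 0)
    (hfin : Ps (n + 1) s E (cylinder Ω (Set.Ioo (-((k : ℝ) + 1)) ((k : ℝ) + 1))) < ⊤) :
    PsL (n + 1) s E (cylinder Ω Set.univ) < ⊤ := by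
  set O := cylinder Ω (Ioo (-((k : ℝ) + 1)) ((k : ℝ) + 1))
  set C := cylinder Ω Set.univ
  have hA : ((E ∩ C) \ O : Set _) ≤ᵐ[volume] cylinder Ω (Iic (-((k : ℝ) + 1))) :=
    diff_cylinder_Ioo_ae_le_Iic (ae_le_set.2 hup) (by linarith)
  have hB : ((Eᶜ ∩ C) \ O : Set _) ≤ᵐ[volume] cylinder Ω (Ici ((k : ℝ) + 1)) :=
    compl_inter_diff_cylinder_Ioo_ae_le_Ici
      ((ae_le_set.2 hlow).trans inter_subset_left.eventuallyLE) (by linarith)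
  have hns : 1 < (n : ℝ) + s := by
    have : (1 : ℝ) ≤ n := by exact_mod_cast hn
    linarith [hs.1]
  calc PsL (n + 1) s E C
      ≤ Ps (n + 1) s E O + Ls (n + 1) s ((E ∩ C) \ O)
          ((Eᶜ ∩ C) \ O) :=
        Ls_le_Ps_add_Ls_diff inter_subset_left inter_subset_left
    _ ≤ Ps (n + 1) s E O +
          Ls (n + 1) s (cylinder Ω (Iic (-((k : ℝ) + 1)))) (cylinder Ω (Ici ((k : ℝ) + 1))) :=
        add_le_add_right (Ls_mono_ae hA hB) _
    _ < ⊤ := ENNReal.add_lt_top.2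
        ⟨hfin, Ls_cylinder_Iic_Ici_lt_top hns hΩb.measure_lt_top.ne (by linarith)⟩

/-- first part of Theorem 1.13: if inside the infinite cylinder `Ω × ℝ` the set
`E` is trapped between `Ω × (−∞,−k]` and `Ω × (−∞,k]` (up to null sets) and `E` has finite
`s`-perimeter in the truncated cylinder `Ω^{k+1} = Ω × (−k−1,k+1)`, then the local part of the
`s`-perimeter of `E` in the infinite cylinder is finite. -/
theorem local_part_finite_in_cylinder
    (n : ℕ) (hn : 1 ≤ n) (s : ℝ) (hs : s ∈ Set.Ioo (0 : ℝ) 1)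
    (Ω : Set (EuclideanSpace ℝ (Fin n))) (hΩo : IsOpen Ω) (hΩb : IsBounded Ω)
    (E : Set (EuclideanSpace ℝ (Fin (n + 1)))) (hE : MeasurableSet E)
    (k : ℕ)
    (hlow : volume (cylinder Ω (Set.Iic (-(k : ℝ))) \ (E ∩ cylinder Ω Set.univ)) = 0)
    (hup : volume ((E ∩ cylinder Ω Set.univ) \ cylinder Ω (Set.Iic (k : ℝ))) = 0)
    (hfin : Ps (n + 1) s E (cylinder Ω (Set.Ioo (-((k : ℝ) + 1)) ((k : ℝ) + 1))) < ⊤) :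
    PsL (n + 1) s E (cylinder Ω Set.univ) < ⊤ :=
  local_part_finite_in_cylinder_general n hn s hs Ω hΩb E k hlow hup hfin
end

section
/- Let s ∈ (0,1), let Ω ⊆ ℝ^n be an open set and let (E_h) be a sequence of measurable sets such that E_h →loc E and lim_{h→∞} P_s(E_h,Ω) = P_s(E,Ω) < ∞. Then lim_{h→∞} P_s(E_h,Ω') = P_s(E,Ω') for every open set Ω' ⊆ Ω. -/
open MeasureTheory Set Filter Topology Metric Bornology
open scoped ENNReal NNReal symmDiff

def LocConv (n : ℕ) (A : ℕ → Set (EuclideanSpace ℝ (Fin n)))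
    (B : Set (EuclideanSpace ℝ (Fin n))) : Prop :=
  ∀ K : Set (EuclideanSpace ℝ (Fin n)), IsBounded K →
    Tendsto (fun h => volume ((A h ∆ B) ∩ K)) atTop (𝓝 0)

theorem ENNReal.tendsto_of_tendsto_add_of_le_liminf {ι : Type*} {l : Filter ι} {u v : ι → ℝ≥0∞}
    {a b : ℝ≥0∞} (hab : a + b ≠ ∞) (h : Tendsto (fun i => u i + v i) l (𝓝 (a + b)))
    (hu : a ≤ liminf u l) (hv : b ≤ liminf v l) :
    Tendsto u l (𝓝 a) := by
  have hv_fin : ∀ᶠ i in l, v i ≠ ∞ :=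
    (h.eventually_lt_const hab.lt_top).mono fun i hi => (ENNReal.add_ne_top.mp hi.ne).2
  refine tendsto_of_le_liminf_of_limsup_le hu ?_
  calc limsup u l
      ≤ limsup (fun i => (u i + v i - (a + b)) + ((a + b) - v i)) l := by
        refine limsup_le_limsup (hv_fin.mono fun i hi => ?_)
        calc u i = u i + v i - v i := (ENNReal.add_sub_cancel_right hi).symm
          _ ≤ _ := tsub_le_tsub_add_tsub
    _ = limsup (fun i => (a + b) - v i) l :=
        ENNReal.limsup_add_of_left_tendsto_zero (by
          simpa using ENNReal.Tendsto.sub h (tendsto_const_nhds (x := a + b)) (Or.inl hab)) _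
    _ = (a + b) - liminf v l := ENNReal.limsup_const_sub _ _ hab
    _ ≤ (a + b) - b := tsub_le_tsub_left hv _
    _ = a := ENNReal.add_sub_cancel_right (ENNReal.add_ne_top.mp hab).2

section KernelCut

variable {α ι : Type*} [MeasurableSpace α] {μ : Measure α} {l : Filter ι} [l.IsCountablyGenerated]

theorem setLIntegral_le_liminf_of_ae_eventually_mem {f : ι → α → ℝ≥0∞} {f₀ : α → ℝ≥0∞}
    {A : ι → Set α} {A₀ : Set α} (hf : ∀ i, Measurable (f i)) (hA : ∀ i, MeasurableSet (A i))
    (hA₀ : MeasurableSet A₀) (hmem : ∀ᵐ x ∂μ, ∀ᶠ i in l, (x ∈ A i ↔ x ∈ A₀))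
    (hle : ∀ x ∈ A₀, f₀ x ≤ liminf (fun i => f i x) l) :
    ∫⁻ x in A₀, f₀ x ∂μ ≤ liminf (fun i => ∫⁻ x in A i, f i x ∂μ) l := by
  simp_rw [← lintegral_indicator hA₀, ← lintegral_indicator (hA _)]
  refine (lintegral_mono_ae ?_).trans (lintegral_liminf_le fun i => (hf i).indicator (hA i))
  filter_upwards [hmem] with x hx
  by_cases hx₀ : x ∈ A₀
  · rw [indicator_of_mem hx₀]
    refine (hle x hx₀).trans (liminf_le_liminf (hx.mono fun i hi => ?_))
    rw [indicator_of_mem (hi.mpr hx₀)]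
  · simp [indicator_of_notMem hx₀]

noncomputable def kernelCut (μ : Measure α) (k : α × α → ℝ≥0∞) (F : Set α) : ℝ≥0∞ :=
  ∫⁻ x in F, ∫⁻ y in Fᶜ, k (x, y) ∂μ ∂μ

variable [SFinite μ] {k k₁ k₂ : α × α → ℝ≥0∞} {F : ι → Set α} {E : Set α}

theorem kernelCut_le_liminf (hk : Measurable k) (hF : ∀ i, MeasurableSet (F i))
    (hE : MeasurableSet E) (hmem : ∀ᵐ x ∂μ, ∀ᶠ i in l, (x ∈ F i ↔ x ∈ E)) :
    kernelCut μ k E ≤ liminf (fun i => kernelCut μ k (F i)) l := by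
  refine setLIntegral_le_liminf_of_ae_eventually_mem (fun _ => hk.lintegral_prod_right') hF hE
    hmem fun x _ => ?_
  refine setLIntegral_le_liminf_of_ae_eventually_mem (fun _ => hk.comp measurable_prodMk_left)
    (fun i => (hF i).compl) hE.compl ?_ fun _ _ => le_liminf_of_le (by isBoundedDefault) (by simp)
  filter_upwards [hmem] with y hy
  exact hy.mono fun i hi => not_congr hi

theorem kernelCut_add (hk₁ : Measurable k₁) (F : Set α) :
    kernelCut μ (k₁ + k₂) F = kernelCut μ k₁ F + kernelCut μ k₂ F := by
  simp only [kernelCut, Pi.add_apply]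
  rw [← lintegral_add_left hk₁.lintegral_prod_right']
  exact lintegral_congr fun x => lintegral_add_left (hk₁.comp measurable_prodMk_left) _

theorem tendsto_kernelCut_of_le (hk₁ : Measurable k₁) (hk₂ : Measurable k₂) (hle : k₁ ≤ k₂)
    (hF : ∀ i, MeasurableSet (F i)) (hE : MeasurableSet E)
    (hmem : ∀ᵐ x ∂μ, ∀ᶠ i in l, (x ∈ F i ↔ x ∈ E)) (hfin : kernelCut μ k₂ E ≠ ∞)
    (h : Tendsto (fun i => kernelCut μ k₂ (F i)) l (𝓝 (kernelCut μ k₂ E))) :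
    Tendsto (fun i => kernelCut μ k₁ (F i)) l (𝓝 (kernelCut μ k₁ E)) := by
  rw [← add_tsub_cancel_of_le hle] at h hfin
  simp only [kernelCut_add hk₁] at h hfin
  exact ENNReal.tendsto_of_tendsto_add_of_le_liminf hfin h
    (kernelCut_le_liminf hk₁ hF hE hmem) (kernelCut_le_liminf (hk₂.sub hk₁) hF hE hmem)

theorem kernelCut_indicator_of_mem_or_mem {Ω F : Set α} (hk : Measurable k)
    (hΩ : MeasurableSet Ω) (hF : MeasurableSet F) :
    kernelCut μ ({p | p.1 ∈ Ω ∨ p.2 ∈ Ω}.indicator k) F =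
      ∫⁻ x in F ∩ Ω, ∫⁻ y in Fᶜ ∩ Ω, k (x, y) ∂μ ∂μ + ∫⁻ x in F ∩ Ω, ∫⁻ y in Fᶜ \ Ω, k (x, y) ∂μ ∂μ
        + ∫⁻ x in F \ Ω, ∫⁻ y in Fᶜ ∩ Ω, k (x, y) ∂μ ∂μ := by
  rw [kernelCut, ← lintegral_inter_add_sdiff _ F hΩ,
    ← lintegral_add_left hk.lintegral_prod_right']
  congr 1
  · refine setLIntegral_congr_fun (hF.inter hΩ) fun x hx => ?_
    have hslice : ∀ y, {p : α × α | p.1 ∈ Ω ∨ p.2 ∈ Ω}.indicator k (x, y) = k (x, y) :=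
      fun y => indicator_of_mem (show (x, y) ∈ _ from Or.inl hx.2) _
    simp only [hslice]
    exact (lintegral_inter_add_sdiff _ _ hΩ).symm
  · refine setLIntegral_congr_fun (hF.diff hΩ) fun x hx => ?_
    have hslice : ∀ y, {p : α × α | p.1 ∈ Ω ∨ p.2 ∈ Ω}.indicator k (x, y)
        = Ω.indicator (fun y => k (x, y)) y := by
      intro y
      by_cases hy : y ∈ Ω <;> simp [indicator, hy, hx.2]
    simp only [hslice]
    rw [setLIntegral_indicator hΩ, inter_comm]

end KernelCut

theorem exists_strictMono_ae_eventually_mem_iff {α : Type*} [PseudoMetricSpace α]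
    [MeasurableSpace α] {μ : Measure α} {A : ℕ → Set α} {E : Set α}
    (h : ∀ K, IsBounded K → Tendsto (fun j => μ ((A j ∆ E) ∩ K)) atTop (𝓝 0)) :
    ∃ φ : ℕ → ℕ, StrictMono φ ∧ ∀ᵐ x ∂μ, ∀ᶠ j in atTop, (x ∈ A (φ j) ↔ x ∈ E) := by
  rcases isEmpty_or_nonempty α with hα | ⟨⟨x₀⟩⟩
  · exact ⟨id, strictMono_id, .of_forall isEmptyElim⟩
  obtain ⟨φ, hφ, hsmall⟩ := extraction_forall_of_eventually fun j =>
    (h (closedBall x₀ j) isBounded_closedBall).eventually_le_const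
      (ENNReal.pow_pos (ENNReal.inv_pos.mpr ENNReal.ofNat_ne_top) j : (0 : ℝ≥0∞) < 2⁻¹ ^ j)
  -- Borel–Cantelli, the measures of the bad sets being dominated by a geometric series
  have hsum : ∑' j, μ ((A (φ j) ∆ E) ∩ closedBall x₀ j) ≠ ∞ :=
    ne_top_of_le_ne_top (by simp [ENNReal.tsum_geometric]) (ENNReal.tsum_le_tsum hsmall)
  refine ⟨φ, hφ, ?_⟩
  filter_upwards [measure_eq_zero_iff_ae_notMem.mp (measure_limsup_atTop_eq_zero hsum)] with x hx
  rw [mem_limsup_iff_frequently_mem, not_frequently] at hx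
  have hball : ∀ᶠ j : ℕ in atTop, x ∈ closedBall x₀ j :=
    tendsto_natCast_atTop_atTop.eventually_ge_atTop (dist x x₀)
  filter_upwards [hx, hball] with j hj hxj
  by_contra hne
  exact hj ⟨mem_symmDiff.mpr (by tauto), hxj⟩

noncomputable def fracKernel (n : ℕ) (s : ℝ)
    (p : EuclideanSpace ℝ (Fin n) × EuclideanSpace ℝ (Fin n)) : ℝ≥0∞ :=
  ENNReal.ofReal (dist p.1 p.2 ^ (-((n : ℝ) + s)))

theorem measurable_fracKernel (n : ℕ) (s : ℝ) : Measurable (fracKernel n s) := by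
  unfold fracKernel
  fun_prop

theorem Ps_eq_kernelCut {n : ℕ} {s : ℝ} {E Ω : Set (EuclideanSpace ℝ (Fin n))}
    (hE : MeasurableSet E) (hΩ : MeasurableSet Ω) :
    Ps n s E Ω = kernelCut volume ({p | p.1 ∈ Ω ∨ p.2 ∈ Ω}.indicator (fracKernel n s)) E :=
  (kernelCut_indicator_of_mem_or_mem (measurable_fracKernel n s) hΩ hE).symm

theorem fracPer_convergence_in_subdomains_general
    (n : ℕ) (s : ℝ)
    (Ω : Set (EuclideanSpace ℝ (Fin n))) (hΩ : IsOpen Ω)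
    (Eh : ℕ → Set (EuclideanSpace ℝ (Fin n))) (hEh : ∀ h, MeasurableSet (Eh h))
    (E : Set (EuclideanSpace ℝ (Fin n))) (hE : MeasurableSet E)
    (hconv : LocConv n Eh E)
    (hfin : Ps n s E Ω < ⊤)
    (hper : Tendsto (fun h => Ps n s (Eh h) Ω) atTop (𝓝 (Ps n s E Ω))) :
    ∀ Ω' : Set (EuclideanSpace ℝ (Fin n)), IsOpen Ω' → Ω' ⊆ Ω →
      Tendsto (fun h => Ps n s (Eh h) Ω') atTop (𝓝 (Ps n s E Ω')) := by
  intro Ω' hΩ' hsub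
  have hkernel : ∀ {U : Set (EuclideanSpace ℝ (Fin n))}, IsOpen U →
      Measurable ({p | p.1 ∈ U ∨ p.2 ∈ U}.indicator (fracKernel n s)) := fun hU =>
    (measurable_fracKernel n s).indicator
      ((measurable_fst hU.measurableSet).union (measurable_snd hU.measurableSet))
  simp only [Ps_eq_kernelCut (hEh _), Ps_eq_kernelCut hE, hΩ.measurableSet,
    hΩ'.measurableSet] at hfin hper ⊢
  refine tendsto_of_subseq_tendsto fun ns hns => ?_
  obtain ⟨φ, hφ, hmem⟩ := exists_strictMono_ae_eventually_mem_iff fun K hK => (hconv K hK).comp hns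
  exact ⟨φ, tendsto_kernelCut_of_le (hkernel hΩ') (hkernel hΩ)
    (indicator_le_indicator_of_subset (fun p => Or.imp (@hsub _) (@hsub _)) fun _ => zero_le)
    (fun _ => hEh _) hE hmem hfin.ne (hper.comp (hns.comp hφ.tendsto_atTop))⟩

/-- Proposition 2.10: if `E_h →loc E` and the `s`-perimeters in `Ω` converge
to the (finite) `s`-perimeter of `E` in `Ω`, then the same convergence holds in every open
subset `Ω' ⊆ Ω`. -/
theorem fracPer_convergence_in_subdomains
    (n : ℕ) (hn : 1 ≤ n) (s : ℝ) (hs : s ∈ Set.Ioo (0 : ℝ) 1)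
    (Ω : Set (EuclideanSpace ℝ (Fin n))) (hΩ : IsOpen Ω)
    (Eh : ℕ → Set (EuclideanSpace ℝ (Fin n))) (hEh : ∀ h, MeasurableSet (Eh h))
    (E : Set (EuclideanSpace ℝ (Fin n))) (hE : MeasurableSet E)
    (hconv : LocConv n Eh E)
    (hfin : Ps n s E Ω < ⊤)
    (hper : Tendsto (fun h => Ps n s (Eh h) Ω) atTop (𝓝 (Ps n s E Ω))) :
    ∀ Ω' : Set (EuclideanSpace ℝ (Fin n)), IsOpen Ω' → Ω' ⊆ Ω →
      Tendsto (fun h => Ps n s (Eh h) Ω') atTop (𝓝 (Ps n s E Ω')) :=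
  fracPer_convergence_in_subdomains_general n s Ω hΩ Eh hEh E hE hconv hfin hper
end

section
/- Let s ∈ (0,1) and let Ω ⊆ ℝ^n be an open set. If (E_h) is a sequence of measurable sets such that for every open Ω' ⊂⊂ Ω there is a constant c(Ω') < ∞ with limsup_{h→∞} P_s^L(E_h,Ω') ≤ c(Ω'), then there exist a subsequence (E_{h_i}) and a measurable set E ⊆ ℝ^n such that E_{h_i} ∩ Ω →loc E ∩ Ω. -/
open MeasureTheory Set Filter Topology Metric Bornology
open scoped ENNReal NNReal symmDiff

/-!
On a dyadic cube `Q` of side `2⁻ᵏ` all distances are at most `diam Q = √n 2⁻ᵏ`, so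
`∫_Q |1_E - ⨍_Q 1_E| = 2 |E ∩ Q| |Eᶜ ∩ Q| / |Q| ≤ 2 diam(Q)^(n+s) L_s(E ∩ Q, Eᶜ ∩ Q) / |Q|`, and
summing over the cubes inside `Ω'` the dyadic averages at scale `k` approximate `1_E` in `L¹`
near a compact `C ⊆ Ω'` up to `C_n 2^(-ks) P_s^L(E, Ω')`. A subsequence along which the masses
`|E_h ∩ Q|` of all dyadic cubes converge exists by compactness of `[0, ∞]^(ℕ × ℤⁿ)`. By Fatou the
limiting step functions `G_k` satisfy `‖G_k - G_j‖_{L¹(C)} ≲ 2^(-ks) + 2^(-js)`, so they converge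
a.e. and in `L¹(C)` to some `l`, and then `1_{E_h} → l` in `L¹(C)` as well. As the `1_{E_h}` are
indicators, `|(E_h ∆ {l > 1/2}) ∩ C| ≤ 2 ‖1_{E_h} - l‖_{L¹(C)}`, and inner regularity passes from
compact subsets of `Ω` to bounded ones.
-/

/-- `|a - b|` via truncated subtraction; note that `ennDist ⊤ ⊤ = 0`. -/
noncomputable def ennDist (a b : ℝ≥0∞) : ℝ≥0∞ := (a - b) + (b - a)

lemma ennDist_comm (a b : ℝ≥0∞) : ennDist a b = ennDist b a := add_comm _ _

@[simp]
lemma ennDist_self (a : ℝ≥0∞) : ennDist a a = 0 := by simp [ennDist]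

lemma ennDist_triangle (a b c : ℝ≥0∞) : ennDist a c ≤ ennDist a b + ennDist b c :=
  calc ennDist a c ≤ ((a - b) + (b - c)) + ((c - b) + (b - a)) :=
        add_le_add tsub_le_tsub_add_tsub tsub_le_tsub_add_tsub
    _ = ennDist a b + ennDist b c := by simp only [ennDist]; ring

lemma tsub_le_ennDist (a b : ℝ≥0∞) : a - b ≤ ennDist a b := le_self_add

lemma tsub_le_ennDist' (a b : ℝ≥0∞) : b - a ≤ ennDist a b := le_add_self

lemma ennDist_le_add (a b : ℝ≥0∞) : ennDist a b ≤ a + b :=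
  add_le_add tsub_le_self tsub_le_self

lemma ennDist_le_two {a b : ℝ≥0∞} (ha : a ≤ 1) (hb : b ≤ 1) : ennDist a b ≤ 2 :=
  (ennDist_le_add a b).trans (by simpa [one_add_one_eq_two] using add_le_add ha hb)

lemma ennDist_ne_top {a b : ℝ≥0∞} (ha : a ≠ ⊤) (hb : b ≠ ⊤) : ennDist a b ≠ ⊤ :=
  ne_top_of_le_ne_top (ENNReal.add_ne_top.2 ⟨ha, hb⟩) (ennDist_le_add a b)

lemma ennDist_one_left {b : ℝ≥0∞} (hb : b ≤ 1) : ennDist 1 b = 1 - b := by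
  simp [ennDist, tsub_eq_zero_of_le hb]

lemma ennDist_zero_left (b : ℝ≥0∞) : ennDist 0 b = b := by simp [ennDist]

lemma Filter.Tendsto.ennDist {ι : Type*} {l : Filter ι} {f g : ι → ℝ≥0∞} {a b : ℝ≥0∞}
    (hf : Tendsto f l (𝓝 a)) (hg : Tendsto g l (𝓝 b)) (hab : a ≠ ⊤ ∨ b ≠ ⊤) :
    Tendsto (fun i => ennDist (f i) (g i)) l (𝓝 (ennDist a b)) :=
  (ENNReal.Tendsto.sub hf hg hab).add (ENNReal.Tendsto.sub hg hf hab.symm)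

lemma Measurable.ennDist {α : Type*} [MeasurableSpace α] {f g : α → ℝ≥0∞}
    (hf : Measurable f) (hg : Measurable g) : Measurable fun x => ennDist (f x) (g x) :=
  (hf.sub hg).add (hg.sub hf)

lemma tendsto_limsup_of_tsum_ennDist_ne_top {u : ℕ → ℝ≥0∞} (hu : ∀ k, u k ≠ ⊤)
    (h : ∑' k, ennDist (u k) (u (k + 1)) ≠ ⊤) :
    Tendsto u atTop (𝓝 (limsup u atTop)) := by
  have hdist : ∀ k, dist (u k).toReal (u (k + 1)).toReal ≤ (ennDist (u k) (u (k + 1))).toReal := by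
    intro k
    have hD := ennDist_ne_top (hu k) (hu (k + 1))
    rw [Real.dist_eq]
    rcases le_total (u k) (u (k + 1)) with hle | hle
    · rw [abs_sub_comm, abs_of_nonneg (sub_nonneg.2 (ENNReal.toReal_mono (hu _) hle)),
        ← ENNReal.toReal_sub_of_le hle (hu _)]
      exact ENNReal.toReal_mono hD (tsub_le_ennDist' _ _)
    · rw [abs_of_nonneg (sub_nonneg.2 (ENNReal.toReal_mono (hu _) hle)),
        ← ENNReal.toReal_sub_of_le hle (hu _)]
      exact ENNReal.toReal_mono hD (tsub_le_ennDist _ _)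
  obtain ⟨L, hL⟩ := cauchySeq_tendsto_of_complete
    (cauchySeq_of_dist_le_of_summable _ hdist (ENNReal.summable_toReal h))
  have hu_tendsto : Tendsto u atTop (𝓝 (ENNReal.ofReal L)) :=
    ((ENNReal.continuous_ofReal.tendsto L).comp hL).congr fun k => ENNReal.ofReal_toReal (hu k)
  rwa [hu_tendsto.limsup_eq]

section LIntegral

variable {α : Type*} [MeasurableSpace α] {μ : Measure α}

lemma lintegral_ennDist_triangle (f : α → ℝ≥0∞) {g h : α → ℝ≥0∞} (hg : Measurable g)
    (hh : Measurable h) :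
    ∫⁻ x, ennDist (f x) (h x) ∂μ ≤ ∫⁻ x, ennDist (f x) (g x) ∂μ + ∫⁻ x, ennDist (g x) (h x) ∂μ :=
  (lintegral_mono fun x => ennDist_triangle _ (g x) _).trans_eq
    (lintegral_add_right' _ (hg.ennDist hh).aemeasurable)

lemma tendsto_lintegral_ennDist_of_tendsto [IsFiniteMeasure μ] {f : ℕ → α → ℝ≥0∞} {g : α → ℝ≥0∞}
    (hf : ∀ i, Measurable (f i)) (hg : Measurable g) (hf1 : ∀ i x, f i x ≤ 1) (hg1 : ∀ x, g x ≤ 1)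
    (hfg : ∀ᵐ x ∂μ, Tendsto (fun i => f i x) atTop (𝓝 (g x))) :
    Tendsto (fun i => ∫⁻ x, ennDist (f i x) (g x) ∂μ) atTop (𝓝 0) := by
  have h := tendsto_lintegral_of_dominated_convergence (fun _ => 2)
    (fun i => (hf i).ennDist hg)
    (fun i => Eventually.of_forall fun x => ennDist_le_two (hf1 i x) (hg1 x))
    (by simpa using ENNReal.mul_ne_top ENNReal.ofNat_ne_top (measure_ne_top μ univ))
    (hfg.mono fun x hx => by
      simpa using hx.ennDist tendsto_const_nhds
        (Or.inr (ne_top_of_le_ne_top ENNReal.one_ne_top (hg1 x))))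
  simpa using h

end LIntegral

section Approximation

variable {α : Type*} [MeasurableSpace α] {μ : Measure α}
  {χ : ℕ → α → ℝ≥0∞} {F : ℕ → ℕ → α → ℝ≥0∞} {G : ℕ → α → ℝ≥0∞} {b : ℕ → ℝ≥0∞}

lemma lintegral_ennDist_le_add_of_tendsto (hχ : ∀ i, Measurable (χ i))
    (hF : ∀ i k, Measurable (F i k)) (hFG : ∀ k x, Tendsto (fun i => F i k x) atTop (𝓝 (G k x)))
    (hG : ∀ k x, G k x ≠ ⊤) {k j : ℕ}
    (hk : ∀ᶠ i in atTop, ∫⁻ x, ennDist (χ i x) (F i k x) ∂μ ≤ b k)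
    (hj : ∀ᶠ i in atTop, ∫⁻ x, ennDist (χ i x) (F i j x) ∂μ ≤ b j) :
    ∫⁻ x, ennDist (G k x) (G j x) ∂μ ≤ b k + b j :=
  calc ∫⁻ x, ennDist (G k x) (G j x) ∂μ
      = ∫⁻ x, liminf (fun i => ennDist (F i k x) (F i j x)) atTop ∂μ :=
        lintegral_congr fun x => (((hFG k x).ennDist (hFG j x) (Or.inl (hG k x))).liminf_eq).symm
    _ ≤ liminf (fun i => ∫⁻ x, ennDist (F i k x) (F i j x) ∂μ) atTop :=
        lintegral_liminf_le fun i => (hF i k).ennDist (hF i j)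
    _ ≤ b k + b j := by
        refine liminf_le_of_frequently_le' ((hk.and hj).mono fun i ⟨hik, hij⟩ => ?_).frequently
        calc ∫⁻ x, ennDist (F i k x) (F i j x) ∂μ
            ≤ ∫⁻ x, ennDist (F i k x) (χ i x) ∂μ + ∫⁻ x, ennDist (χ i x) (F i j x) ∂μ :=
              lintegral_ennDist_triangle _ (hχ i) (hF i j)
          _ ≤ b k + b j := by simp_rw [ennDist_comm (F i k _)]; exact add_le_add hik hij

lemma tsum_lintegral_ennDist_succ_ne_top [IsFiniteMeasure μ] (hG1 : ∀ k x, G k x ≤ 1)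
    (hb : ∑' k, b k ≠ ⊤)
    (hGb : ∀ᶠ k in atTop, ∫⁻ x, ennDist (G k x) (G (k + 1) x) ∂μ ≤ b k + b (k + 1)) :
    ∑' k, ∫⁻ x, ennDist (G k x) (G (k + 1) x) ∂μ ≠ ⊤ := by
  obtain ⟨K, hK⟩ := eventually_atTop.1 hGb
  have hfin : ∀ k, ∫⁻ x, ennDist (G k x) (G (k + 1) x) ∂μ ≠ ⊤ := fun k =>
    ne_top_of_le_ne_top
      (by simpa using ENNReal.mul_ne_top ENNReal.ofNat_ne_top (measure_ne_top μ univ))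
      (lintegral_mono fun x => ennDist_le_two (hG1 k x) (hG1 (k + 1) x))
  have htail : ∀ j, ∑' k, b (k + j) ≤ ∑' k, b k := fun j =>
    ENNReal.tsum_comp_le_tsum_of_injective (add_left_injective j) b
  rw [← ENNReal.summable.sum_add_tsum_nat_add' (k := K)]
  refine ENNReal.add_ne_top.2 ⟨ENNReal.sum_ne_top.2 fun k _ => hfin k, ?_⟩
  refine ne_top_of_le_ne_top ?_ (ENNReal.tsum_le_tsum fun k => hK (k + K) (Nat.le_add_left K k))
  rw [ENNReal.tsum_add]
  exact ENNReal.add_ne_top.2 ⟨ne_top_of_le_ne_top hb (htail K),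
    ne_top_of_le_ne_top hb (by simpa only [add_assoc] using htail (K + 1))⟩

lemma ae_tendsto_limsup_of_tsum_lintegral_ennDist_ne_top (hG : ∀ k, Measurable (G k))
    (hG_ne_top : ∀ k x, G k x ≠ ⊤) (h : ∑' k, ∫⁻ x, ennDist (G k x) (G (k + 1) x) ∂μ ≠ ⊤) :
    ∀ᵐ x ∂μ, Tendsto (fun k => G k x) atTop (𝓝 (limsup (fun k => G k x) atTop)) := by
  rw [← lintegral_tsum fun k => ((hG k).ennDist (hG (k + 1))).aemeasurable] at h
  filter_upwards [ae_lt_top (Measurable.tsum fun k => (hG k).ennDist (hG (k + 1))) h]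
    with x hx
  exact tendsto_limsup_of_tsum_ennDist_ne_top (hG_ne_top · x) hx.ne

theorem tendsto_lintegral_ennDist_limsup [IsFiniteMeasure μ] (hχ : ∀ i, Measurable (χ i))
    (hF : ∀ i k, Measurable (F i k)) (hF1 : ∀ i k x, F i k x ≤ 1)
    (hFG : ∀ k x, Tendsto (fun i => F i k x) atTop (𝓝 (G k x))) (hb : ∑' k, b k ≠ ⊤)
    (happrox : ∀ᶠ k in atTop, ∀ᶠ i in atTop, ∫⁻ x, ennDist (χ i x) (F i k x) ∂μ ≤ b k) :
    Tendsto (fun i => ∫⁻ x, ennDist (χ i x) (limsup (fun k => G k x) atTop) ∂μ) atTop (𝓝 0) := by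
  set l := fun x => limsup (fun k => G k x) atTop
  have hG : ∀ k, Measurable (G k) := fun k =>
    measurable_of_tendsto_metrizable (fun i => hF i k) (tendsto_pi_nhds.2 (hFG k))
  have hG1 : ∀ k x, G k x ≤ 1 := fun k x => le_of_tendsto' (hFG k x) fun i => hF1 i k x
  have hG_ne_top : ∀ k x, G k x ≠ ⊤ := fun k x => ne_top_of_le_ne_top ENNReal.one_ne_top (hG1 k x)
  have hl : Measurable l := Measurable.limsup hG
  have hl1 : ∀ x, l x ≤ 1 := fun x =>
    limsup_le_of_le (by isBoundedDefault) (Eventually.of_forall fun k => hG1 k x)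
  have hGb : ∀ᶠ k in atTop, ∫⁻ x, ennDist (G k x) (G (k + 1) x) ∂μ ≤ b k + b (k + 1) :=
    (happrox.and ((tendsto_add_atTop_nat 1).eventually happrox)).mono fun _ ⟨hk, hk1⟩ =>
      lintegral_ennDist_le_add_of_tendsto hχ hF hFG hG_ne_top hk hk1
  have hGl : Tendsto (fun k => ∫⁻ x, ennDist (G k x) (l x) ∂μ) atTop (𝓝 0) :=
    tendsto_lintegral_ennDist_of_tendsto hG hl hG1 hl1
      (ae_tendsto_limsup_of_tsum_lintegral_ennDist_ne_top hG hG_ne_top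
        (tsum_lintegral_ennDist_succ_ne_top hG1 hb hGb))
  have hFG' : ∀ k, Tendsto (fun i => ∫⁻ x, ennDist (F i k x) (G k x) ∂μ) atTop (𝓝 0) := fun k =>
    tendsto_lintegral_ennDist_of_tendsto (hF · k) (hG k) (hF1 · k) (hG1 k)
      (ae_of_all _ (hFG k))
  rw [ENNReal.tendsto_atTop_zero]
  intro ε hε
  have hε3 : 0 < ε / 3 := ENNReal.div_pos hε.ne' ENNReal.ofNat_ne_top
  obtain ⟨k, hk, hbk, hGlk⟩ := (happrox.and
    (((ENNReal.tendsto_atTop_zero_of_tsum_ne_top hb).eventually (ge_mem_nhds hε3)).and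
      (hGl.eventually (ge_mem_nhds hε3)))).exists
  obtain ⟨N, hN⟩ := eventually_atTop.1 (hk.and ((hFG' k).eventually (ge_mem_nhds hε3)))
  refine ⟨N, fun i hi => ?_⟩
  calc ∫⁻ x, ennDist (χ i x) (l x) ∂μ
      ≤ ∫⁻ x, ennDist (χ i x) (F i k x) ∂μ +
          (∫⁻ x, ennDist (F i k x) (G k x) ∂μ + ∫⁻ x, ennDist (G k x) (l x) ∂μ) :=
        (lintegral_ennDist_triangle _ (hF i k) hl).trans
          (add_le_add le_rfl (lintegral_ennDist_triangle _ (hG k) hl))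
    _ ≤ ε / 3 + (ε / 3 + ε / 3) := add_le_add ((hN i hi).1.trans hbk) (add_le_add (hN i hi).2 hGlk)
    _ = ε := by rw [← add_assoc, ENNReal.add_thirds]

end Approximation

section Averages

variable {α : Type*} [MeasurableSpace α] (μ : Measure α)

lemma setLIntegral_ennDist_indicator_average {Q E : Set α} (hQ : MeasurableSet Q)
    (hE : MeasurableSet E) (h0 : μ Q ≠ 0) (htop : μ Q ≠ ⊤) :
    ∫⁻ x in Q, ennDist (E.indicator 1 x) (μ (E ∩ Q) / μ Q) ∂μ
      = 2 * (μ (E ∩ Q) * μ (Eᶜ ∩ Q)) / μ Q := by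
  set m := μ (E ∩ Q)
  set a := m / μ Q
  have hm_le : m ≤ μ Q := measure_mono inter_subset_right
  have ha1 : a ≤ 1 := ENNReal.div_le_of_le_mul (by simpa using hm_le)
  have hcompl : μ (Eᶜ ∩ Q) = μ Q - m := by
    rw [inter_comm, ← sdiff_eq, ← sdiff_self_inter, measure_sdiff inter_subset_left
      (hQ.inter hE).nullMeasurableSet (measure_ne_top_of_subset inter_subset_left htop),
      inter_comm]
  have hin : ∫⁻ x in Q ∩ E, ennDist (E.indicator 1 x) a ∂μ = (1 - a) * m := by
    rw [setLIntegral_congr_fun (hQ.inter hE) fun x hx => by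
      rw [indicator_of_mem hx.2, Pi.one_apply, ennDist_one_left ha1], setLIntegral_const,
      inter_comm, mul_comm]
  have hout : ∫⁻ x in Q \ E, ennDist (E.indicator 1 x) a ∂μ = a * (μ Q - m) := by
    rw [setLIntegral_congr_fun (hQ.diff hE) fun x hx => by
      rw [indicator_of_notMem hx.2, ennDist_zero_left], setLIntegral_const, sdiff_eq,
      inter_comm, hcompl, mul_comm]
  have h1a : 1 - a = (μ Q - m) / μ Q := by
    rw [ENNReal.sub_div (fun _ _ => h0), ENNReal.div_self h0 htop]
  rw [← lintegral_inter_add_sdiff _ Q hE, hin, hout, h1a, hcompl]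
  simp only [a, div_eq_mul_inv]
  ring

lemma measure_symmDiff_inter_le {A : Set α} (hA : MeasurableSet A) {l : α → ℝ≥0∞}
    (hl : Measurable l) (C : Set α) :
    μ ((A ∆ {x | 1 / 2 < l x}) ∩ C) ≤ 2 * ∫⁻ x in C, ennDist (A.indicator 1 x) (l x) ∂μ := by
  have hS : MeasurableSet (A ∆ {x | 1 / 2 < l x}) :=
    hA.symmDiff (measurableSet_lt measurable_const hl)
  -- on the symmetric difference the indicator of `A` and `l` are at least `1/2` apart
  have hpt : ∀ x, (A ∆ {x | 1 / 2 < l x}).indicator 1 x ≤ 2 * ennDist (A.indicator 1 x) (l x) := by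
    intro x
    by_cases hx : x ∈ A ∆ {x | 1 / 2 < l x}
    · rw [indicator_of_mem hx, Pi.one_apply,
        ← ENNReal.mul_inv_cancel two_ne_zero ENNReal.ofNat_ne_top, ← one_div]
      gcongr
      rcases mem_symmDiff.1 hx with ⟨hxA, hxl⟩ | ⟨hxl, hxA⟩
      · rw [indicator_of_mem hxA, Pi.one_apply]
        refine le_trans ?_ (tsub_le_ennDist _ _)
        calc 1 / 2 = 1 - 1 / 2 := (ENNReal.sub_half ENNReal.one_ne_top).symm
          _ ≤ 1 - l x := tsub_le_tsub_left (not_lt.1 hxl) 1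
      · rw [indicator_of_notMem hxA, ennDist_zero_left]
        exact le_of_lt hxl
    · rw [indicator_of_notMem hx]
      exact zero_le
  calc μ ((A ∆ {x | 1 / 2 < l x}) ∩ C)
      = ∫⁻ x in C, (A ∆ {x | 1 / 2 < l x}).indicator 1 x ∂μ := by
        rw [lintegral_indicator_one hS, Measure.restrict_apply hS]
    _ ≤ ∫⁻ x in C, 2 * ennDist (A.indicator 1 x) (l x) ∂μ := lintegral_mono hpt
    _ = 2 * ∫⁻ x in C, ennDist (A.indicator 1 x) (l x) ∂μ :=
        lintegral_const_mul' _ _ ENNReal.ofNat_ne_top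

end Averages

lemma measure_mul_measure_le_lintegral_rpow_neg_dist {X : Type*} [MetricSpace X]
    [MeasurableSpace X] [BorelSpace X] [SecondCountableTopology X] (μ : Measure X) [SFinite μ]
    [NullSingletonClass μ] {p R : ℝ} (hp : 0 < p) (hR : 0 < R) {A B : Set X}
    (hB : MeasurableSet B) (hd : ∀ x ∈ A, ∀ y ∈ B, dist x y ≤ R) :
    μ A * μ B ≤
      ENNReal.ofReal (R ^ p) * ∫⁻ x in A, ∫⁻ y in B, ENNReal.ofReal (dist x y ^ (-p)) ∂μ ∂μ := by
  have hinner : Measurable fun x => ∫⁻ y in B, ENNReal.ofReal (dist x y ^ (-p)) ∂μ :=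
    Measurable.lintegral_prod_right' (ENNReal.measurable_ofReal.comp
      (measurable_dist.pow_const (-p)))
  -- `1 ≤ R ^ p * dist x y ^ (-p)` off the null diagonal
  have hpt : ∀ x ∈ A,
      μ B ≤ ENNReal.ofReal (R ^ p) * ∫⁻ y in B, ENNReal.ofReal (dist x y ^ (-p)) ∂μ := by
    intro x hx
    rw [← setLIntegral_one B, ← lintegral_const_mul' _ _ ENNReal.ofReal_ne_top]
    have hne : ∀ᵐ y ∂(μ.restrict B), y ≠ x :=
      ae_restrict_of_ae (compl_mem_ae_iff.2 (measure_singleton x))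
    refine lintegral_mono_ae ?_
    filter_upwards [ae_restrict_mem hB, hne] with y hyB hyx
    have hle : R ^ (-p) ≤ dist x y ^ (-p) :=
      Real.rpow_le_rpow_of_nonpos (dist_pos.2 hyx.symm) (hd x hx y hyB) (neg_nonpos.2 hp.le)
    calc (1 : ℝ≥0∞) = ENNReal.ofReal (R ^ p) * ENNReal.ofReal (R ^ (-p)) := by
          rw [← ENNReal.ofReal_mul (Real.rpow_nonneg hR.le _), ← Real.rpow_add hR, add_neg_cancel,
            Real.rpow_zero, ENNReal.ofReal_one]
      _ ≤ _ := by gcongr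
  calc μ A * μ B = ∫⁻ _ in A, μ B ∂μ := by rw [setLIntegral_const, mul_comm]
    _ ≤ ∫⁻ x in A, ENNReal.ofReal (R ^ p) * ∫⁻ y in B, ENNReal.ofReal (dist x y ^ (-p)) ∂μ ∂μ :=
        setLIntegral_mono (measurable_const.mul hinner) hpt
    _ = _ := lintegral_const_mul' _ _ ENNReal.ofReal_ne_top

section DyadicCubes

def dyadicCube (n k : ℕ) (z : Fin n → ℤ) : Set (EuclideanSpace ℝ (Fin n)) :=
  {x | ∀ i, (z i : ℝ) ≤ 2 ^ k * x i ∧ 2 ^ k * x i < z i + 1}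

noncomputable def dyadicIndex (n k : ℕ) (x : EuclideanSpace ℝ (Fin n)) : Fin n → ℤ :=
  fun i => ⌊2 ^ k * x i⌋

variable {n k : ℕ}

lemma dyadicIndex_eq_of_mem {x : EuclideanSpace ℝ (Fin n)} {z : Fin n → ℤ}
    (h : x ∈ dyadicCube n k z) : dyadicIndex n k x = z :=
  funext fun i => Int.floor_eq_iff.2 (h i)

lemma mem_dyadicCube_dyadicIndex (x : EuclideanSpace ℝ (Fin n)) :
    x ∈ dyadicCube n k (dyadicIndex n k x) :=
  fun _ => ⟨Int.floor_le _, Int.lt_floor_add_one _⟩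

lemma disjoint_dyadicCube {z z' : Fin n → ℤ} (h : z ≠ z') :
    Disjoint (dyadicCube n k z) (dyadicCube n k z') :=
  disjoint_left.2 fun _ hx hx' =>
    h ((dyadicIndex_eq_of_mem hx).symm.trans (dyadicIndex_eq_of_mem hx'))

lemma measurable_dyadicIndex : Measurable (dyadicIndex n k) :=
  measurable_pi_lambda _ fun i => (by fun_prop : Measurable fun x : EuclideanSpace ℝ (Fin n) =>
    2 ^ k * x i).floor

lemma measurableSet_dyadicCube {z : Fin n → ℤ} : MeasurableSet (dyadicCube n k z) := by
  have : dyadicCube n k z = dyadicIndex n k ⁻¹' {z} :=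
    ext fun x => ⟨dyadicIndex_eq_of_mem, fun hx => hx ▸ mem_dyadicCube_dyadicIndex x⟩
  exact this ▸ measurable_dyadicIndex (measurableSet_singleton z)

lemma volume_dyadicCube (z : Fin n → ℤ) :
    volume (dyadicCube n k z) = ENNReal.ofReal ((2 ^ k)⁻¹) ^ n := by
  have hcube : dyadicCube n k z = (MeasurableEquiv.toLp 2 (Fin n → ℝ)).symm ⁻¹'
      univ.pi fun i => Ico ((z i : ℝ) / 2 ^ k) ((z i + 1) / 2 ^ k) := by
    ext x
    simp only [dyadicCube, mem_preimage, Set.mem_pi, mem_univ, mem_Ico, mem_ofPred_eq, true_implies]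
    refine forall_congr' fun i => ?_
    rw [div_le_iff₀' (by positivity), lt_div_iff₀' (by positivity)]
    rfl
  have hside : ∀ i, volume (Ico ((z i : ℝ) / 2 ^ k) ((z i + 1) / 2 ^ k))
      = ENNReal.ofReal ((2 ^ k)⁻¹) := fun i => by
    rw [Real.volume_Ico]
    congr 1
    field_simp
    ring
  rw [hcube, (EuclideanSpace.volume_preserving_symm_measurableEquiv_toLp (Fin n)).measure_preimage
      (MeasurableSet.univ_pi fun _ => measurableSet_Ico).nullMeasurableSet, volume_pi_pi]
  simp [hside]

lemma volume_dyadicCube_ne_zero (z : Fin n → ℤ) : volume (dyadicCube n k z) ≠ 0 := by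
  rw [volume_dyadicCube]
  exact pow_ne_zero _ (ENNReal.ofReal_pos.2 (by positivity)).ne'

lemma volume_dyadicCube_ne_top (z : Fin n → ℤ) : volume (dyadicCube n k z) ≠ ⊤ := by
  rw [volume_dyadicCube]
  exact ENNReal.pow_ne_top ENNReal.ofReal_ne_top

lemma dist_le_of_mem_dyadicCube {z : Fin n → ℤ} {x y : EuclideanSpace ℝ (Fin n)}
    (hx : x ∈ dyadicCube n k z) (hy : y ∈ dyadicCube n k z) :
    dist x y ≤ √n * (2 ^ k)⁻¹ := by
  have hside : ∀ i, dist (x i) (y i) ^ 2 ≤ ((2 ^ k)⁻¹ : ℝ) ^ 2 := by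
    intro i
    have hxy : |x i - y i| ≤ (2 ^ k)⁻¹ := by
      rw [abs_le, inv_eq_one_div, le_div_iff₀ (by positivity), neg_le, ← neg_sub,
        le_div_iff₀ (by positivity)]
      constructor <;> nlinarith [hx i, hy i]
    rw [Real.dist_eq]
    exact pow_le_pow_left₀ (abs_nonneg _) hxy 2
  calc dist x y = √(∑ i, dist (x i) (y i) ^ 2) := EuclideanSpace.dist_eq x y
    _ ≤ √(n * ((2 ^ k)⁻¹ : ℝ) ^ 2) := by
        gcongr
        simpa using Finset.sum_le_card_nsmul Finset.univ _ _ fun i _ => hside i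
    _ = √n * (2 ^ k)⁻¹ := by rw [Real.sqrt_mul (by positivity), Real.sqrt_sq (by positivity)]

end DyadicCubes

section DyadicAverages

noncomputable def dyadicDensity (n k : ℕ) (w : (Fin n → ℤ) → ℝ≥0∞)
    (x : EuclideanSpace ℝ (Fin n)) : ℝ≥0∞ :=
  w (dyadicIndex n k x) / volume (dyadicCube n k (dyadicIndex n k x))

noncomputable def dyadicAverage (n k : ℕ) (E : Set (EuclideanSpace ℝ (Fin n))) :
    EuclideanSpace ℝ (Fin n) → ℝ≥0∞ :=
  dyadicDensity n k fun z => volume (E ∩ dyadicCube n k z)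

/-- `2 diam(Q)^(n+s) / |Q|` for a dyadic cube `Q` of side `2⁻ᵏ`, see `dyadicPoincareConst_eq`. -/
noncomputable def dyadicPoincareConst (n : ℕ) (s : ℝ) (k : ℕ) : ℝ≥0∞ :=
  2 * ENNReal.ofReal (√n ^ ((n : ℝ) + s)) * ENNReal.ofReal (2 ^ (-s)) ^ k

variable {n k : ℕ} {s : ℝ}

lemma measurable_dyadicDensity (w : (Fin n → ℤ) → ℝ≥0∞) : Measurable (dyadicDensity n k w) :=
  (measurable_of_countable fun z => w z / volume (dyadicCube n k z)).comp measurable_dyadicIndex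

lemma dyadicAverage_le_one (E : Set (EuclideanSpace ℝ (Fin n))) (x : EuclideanSpace ℝ (Fin n)) :
    dyadicAverage n k E x ≤ 1 :=
  ENNReal.div_le_of_le_mul (by simpa using measure_mono inter_subset_right)

lemma dyadicPoincareConst_eq (z : Fin n → ℤ) :
    dyadicPoincareConst n s k =
      2 * ENNReal.ofReal ((√n * (2 ^ k)⁻¹) ^ ((n : ℝ) + s)) / volume (dyadicCube n k z) := by
  have hside : (0 : ℝ) < (2 ^ k)⁻¹ := by positivity
  have hscale : ENNReal.ofReal (((2 : ℝ) ^ k)⁻¹ ^ s) = ENNReal.ofReal (2 ^ (-s)) ^ k := by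
    rw [← ENNReal.ofReal_pow (by positivity), ← Real.rpow_natCast 2 k, ← Real.rpow_neg zero_le_two,
      ← Real.rpow_natCast (2 ^ (-s)) k, ← Real.rpow_mul zero_le_two, ← Real.rpow_mul zero_le_two]
    ring_nf
  rw [volume_dyadicCube, Real.mul_rpow (Real.sqrt_nonneg _) hside.le, Real.rpow_add hside,
    Real.rpow_natCast, ENNReal.ofReal_mul (by positivity), ENNReal.ofReal_mul (by positivity),
    ENNReal.ofReal_pow hside.le, hscale,
    ENNReal.eq_div_iff (pow_ne_zero _ (ENNReal.ofReal_pos.2 hside).ne')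
      (ENNReal.pow_ne_top ENNReal.ofReal_ne_top), dyadicPoincareConst]
  ring

lemma tsum_dyadicPoincareConst_ne_top (hs : 0 < s) : ∑' k, dyadicPoincareConst n s k ≠ ⊤ := by
  have hr : ENNReal.ofReal (2 ^ (-s)) < 1 := ENNReal.ofReal_lt_one.2
    (Real.rpow_lt_one_of_one_lt_of_neg one_lt_two (neg_lt_zero.2 hs))
  simp only [dyadicPoincareConst]
  rw [ENNReal.tsum_mul_left, ENNReal.tsum_geometric]
  exact ENNReal.mul_ne_top (ENNReal.mul_ne_top ENNReal.ofNat_ne_top ENNReal.ofReal_ne_top)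
    (ENNReal.inv_ne_top.2 (tsub_pos_of_lt hr).ne')

lemma setLIntegral_ennDist_indicator_average_dyadicCube_le (hn : 1 ≤ n) (hs : 0 < s)
    (z : Fin n → ℤ) {E : Set (EuclideanSpace ℝ (Fin n))} (hE : MeasurableSet E) :
    ∫⁻ x in dyadicCube n k z, ennDist (E.indicator 1 x)
        (volume (E ∩ dyadicCube n k z) / volume (dyadicCube n k z))
      ≤ dyadicPoincareConst n s k * Ls n s (E ∩ dyadicCube n k z) (Eᶜ ∩ dyadicCube n k z) := by
  have : Nonempty (Fin n) := ⟨⟨0, hn⟩⟩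
  have hdiam : 0 < √n * (2 ^ k)⁻¹ :=
    mul_pos (Real.sqrt_pos.2 (by exact_mod_cast hn)) (by positivity)
  have hprod := measure_mul_measure_le_lintegral_rpow_neg_dist volume
    (by positivity : (0 : ℝ) < n + s) hdiam (A := E ∩ dyadicCube n k z)
    (hE.compl.inter measurableSet_dyadicCube)
    fun x hx y hy => dist_le_of_mem_dyadicCube hx.2 hy.2
  rw [setLIntegral_ennDist_indicator_average volume measurableSet_dyadicCube hE
    (volume_dyadicCube_ne_zero z) (volume_dyadicCube_ne_top z), dyadicPoincareConst_eq z]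
  calc 2 * (volume (E ∩ dyadicCube n k z) * volume (Eᶜ ∩ dyadicCube n k z)) /
        volume (dyadicCube n k z)
      ≤ 2 * (ENNReal.ofReal ((√n * (2 ^ k)⁻¹) ^ ((n : ℝ) + s)) *
          Ls n s (E ∩ dyadicCube n k z) (Eᶜ ∩ dyadicCube n k z)) / volume (dyadicCube n k z) := by
        gcongr 2 * ?_ / _
        exact hprod
    _ = _ := by simp only [div_eq_mul_inv]; ring

end DyadicAverages

section FractionalPerimeter

variable {n k : ℕ} {s : ℝ}

lemma setLIntegral_ennDist_dyadicAverage_le (hn : 1 ≤ n) (hs : 0 < s)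
    {E Ω' S : Set (EuclideanSpace ℝ (Fin n))} (hE : MeasurableSet E)
    (hS : ∀ x ∈ S, dyadicCube n k (dyadicIndex n k x) ⊆ Ω') :
    ∫⁻ x in S, ennDist (E.indicator 1 x) (dyadicAverage n k E x)
      ≤ dyadicPoincareConst n s k * PsL n s E Ω' := by
  set T := {z : Fin n → ℤ | dyadicCube n k z ⊆ Ω'}
  set g := fun x => ∫⁻ y in Eᶜ ∩ Ω', ENNReal.ofReal (dist x y ^ (-((n : ℝ) + s)))
  have hdisj : Pairwise (Function.onFun Disjoint fun z : T => dyadicCube n k z) :=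
    fun z w hzw => disjoint_dyadicCube (Subtype.coe_injective.ne hzw)
  have hLs : ∑' z : T, Ls n s (E ∩ dyadicCube n k z) (Eᶜ ∩ dyadicCube n k z) ≤ PsL n s E Ω' :=
    calc ∑' z : T, Ls n s (E ∩ dyadicCube n k z) (Eᶜ ∩ dyadicCube n k z)
        ≤ ∑' z : T, ∫⁻ x in E ∩ dyadicCube n k z, g x :=
          ENNReal.tsum_le_tsum fun z =>
            lintegral_mono fun x => lintegral_mono_set (inter_subset_inter_right _ z.2)
      _ = ∫⁻ x in ⋃ z : T, E ∩ dyadicCube n k z, g x :=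
          (lintegral_iUnion (fun _ => hE.inter measurableSet_dyadicCube)
            (fun z w hzw => (hdisj hzw).mono inter_subset_right inter_subset_right) g).symm
      _ ≤ PsL n s E Ω' := lintegral_mono_set (iUnion_subset fun z => inter_subset_inter_right _ z.2)
  calc ∫⁻ x in S, ennDist (E.indicator 1 x) (dyadicAverage n k E x)
      ≤ ∫⁻ x in ⋃ z : T, dyadicCube n k z, ennDist (E.indicator 1 x) (dyadicAverage n k E x) :=
        lintegral_mono_set fun x hx => mem_iUnion.2 ⟨⟨_, hS x hx⟩, mem_dyadicCube_dyadicIndex x⟩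
    _ = ∑' z : T, ∫⁻ x in dyadicCube n k z, ennDist (E.indicator 1 x) (dyadicAverage n k E x) :=
        lintegral_iUnion (fun _ => measurableSet_dyadicCube) hdisj _
    _ = ∑' z : T, ∫⁻ x in dyadicCube n k z, ennDist (E.indicator 1 x)
          (volume (E ∩ dyadicCube n k z) / volume (dyadicCube n k z)) :=
        tsum_congr fun z => setLIntegral_congr_fun measurableSet_dyadicCube fun x hx => by
          rw [dyadicAverage, dyadicDensity, dyadicIndex_eq_of_mem hx]
    _ ≤ ∑' z : T, dyadicPoincareConst n s k *
          Ls n s (E ∩ dyadicCube n k z) (Eᶜ ∩ dyadicCube n k z) :=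
        ENNReal.tsum_le_tsum fun z =>
          setLIntegral_ennDist_indicator_average_dyadicCube_le hn hs z hE
    _ ≤ dyadicPoincareConst n s k * PsL n s E Ω' := by
        rw [ENNReal.tsum_mul_left]
        gcongr

lemma eventually_setLIntegral_ennDist_dyadicAverage_le (hn : 1 ≤ n) (hs : 0 < s)
    {C Ω' : Set (EuclideanSpace ℝ (Fin n))} (hC : IsCompact C) (hΩ' : IsOpen Ω')
    (hCΩ' : C ⊆ Ω') :
    ∀ᶠ k in atTop, ∀ E, MeasurableSet E →
      ∫⁻ x in C, ennDist (E.indicator 1 x) (dyadicAverage n k E x)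
        ≤ dyadicPoincareConst n s k * PsL n s E Ω' := by
  obtain ⟨r, hr, hrΩ'⟩ := hC.exists_thickening_subset_open hΩ' hCΩ'
  have hdiam : Tendsto (fun k : ℕ => √n * ((2 : ℝ) ^ k)⁻¹) atTop (𝓝 0) := by
    simpa using (tendsto_inv_atTop_zero.comp
      (tendsto_pow_atTop_atTop_of_one_lt one_lt_two)).const_mul √n
  filter_upwards [hdiam.eventually_lt_const hr] with k hk E hE
  refine setLIntegral_ennDist_dyadicAverage_le hn hs hE fun x hx y hy => hrΩ' ?_
  exact mem_thickening_iff.2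
    ⟨x, hx, (dist_le_of_mem_dyadicCube hy (mem_dyadicCube_dyadicIndex x)).trans_lt hk⟩

theorem tendsto_setLIntegral_ennDist_indicator_limsup_dyadicDensity (hn : 1 ≤ n) (hs : 0 < s)
    {E : ℕ → Set (EuclideanSpace ℝ (Fin n))} (hE : ∀ i, MeasurableSet (E i))
    {ν : ℕ → (Fin n → ℤ) → ℝ≥0∞}
    (hν : ∀ k z, Tendsto (fun i => volume (E i ∩ dyadicCube n k z)) atTop (𝓝 (ν k z)))
    {C Ω' : Set (EuclideanSpace ℝ (Fin n))} (hC : IsCompact C) (hΩ' : IsOpen Ω')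
    (hCΩ' : C ⊆ Ω') {c : ℝ≥0∞} (hc : c ≠ ⊤) (hper : ∀ᶠ i in atTop, PsL n s (E i) Ω' ≤ c) :
    Tendsto (fun i => ∫⁻ x in C, ennDist ((E i).indicator 1 x)
      (limsup (fun k => dyadicDensity n k (ν k) x) atTop)) atTop (𝓝 0) := by
  have : IsFiniteMeasure (volume.restrict C) := isFiniteMeasure_restrict.2 hC.measure_lt_top.ne
  refine tendsto_lintegral_ennDist_limsup (F := fun i k => dyadicAverage n k (E i))
    (b := fun k => dyadicPoincareConst n s k * c) (fun i => measurable_one.indicator (hE i))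
    (fun _ _ => measurable_dyadicDensity _) (fun _ _ => dyadicAverage_le_one _)
    (fun k x => ENNReal.Tendsto.div_const (hν k _) (Or.inr (volume_dyadicCube_ne_zero _)))
    (by rw [ENNReal.tsum_mul_right]
        exact ENNReal.mul_ne_top (tsum_dyadicPoincareConst_ne_top hs) hc) ?_
  filter_upwards [eventually_setLIntegral_ennDist_dyadicAverage_le hn hs hC hΩ' hCΩ'] with k hk
  filter_upwards [hper] with i hi
  exact (hk (E i) (hE i)).trans (by gcongr)

end FractionalPerimeter

lemma exists_subseq_tendsto_volume_inter_dyadicCube {n : ℕ}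
    (E : ℕ → Set (EuclideanSpace ℝ (Fin n))) :
    ∃ ν : ℕ → (Fin n → ℤ) → ℝ≥0∞, ∃ φ : ℕ → ℕ, StrictMono φ ∧
      ∀ k z, Tendsto (fun i => volume (E (φ i) ∩ dyadicCube n k z)) atTop (𝓝 (ν k z)) := by
  obtain ⟨ν, -, φ, hφ, hlim⟩ := isCompact_univ.tendsto_subseq
    (x := fun i k z => volume (E i ∩ dyadicCube n k z)) fun _ => mem_univ _
  exact ⟨ν, φ, hφ, fun k z => tendsto_pi_nhds.1 (tendsto_pi_nhds.1 hlim k) z⟩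

lemma locConv_inter_of_forall_isCompact {n : ℕ} {Ω : Set (EuclideanSpace ℝ (Fin n))}
    (hΩ : IsOpen Ω) {A : ℕ → Set (EuclideanSpace ℝ (Fin n))} {B : Set (EuclideanSpace ℝ (Fin n))}
    (h : ∀ C, IsCompact C → C ⊆ Ω → Tendsto (fun i => volume ((A i ∆ B) ∩ C)) atTop (𝓝 0)) :
    LocConv n (fun i => A i ∩ Ω) (B ∩ Ω) := by
  intro K hK
  rw [ENNReal.tendsto_atTop_zero]
  intro ε hε
  obtain ⟨C, hCΩK, hC, hCε⟩ :=
    (hΩ.measurableSet.inter isClosed_closure.measurableSet).exists_isCompact_sdiff_lt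
      (measure_ne_top_of_subset inter_subset_right
        (hK.isCompact_closure.measure_lt_top (μ := volume)).ne)
    (ENNReal.half_pos hε.ne').ne'
  obtain ⟨N, hN⟩ := ENNReal.tendsto_atTop_zero.1 (h C hC (hCΩK.trans inter_subset_left)) (ε / 2)
    (ENNReal.half_pos hε.ne')
  refine ⟨N, fun i hi => ?_⟩
  have hsub : ((A i ∩ Ω) ∆ (B ∩ Ω)) ∩ K ⊆ ((A i ∆ B) ∩ C) ∪ ((Ω ∩ closure K) \ C) := by
    rintro x ⟨hx, hxK⟩
    rw [← inter_symmDiff_distrib_right] at hx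
    by_cases hxC : x ∈ C
    · exact Or.inl ⟨hx.1, hxC⟩
    · exact Or.inr ⟨⟨hx.2, subset_closure hxK⟩, hxC⟩
  calc volume (((A i ∩ Ω) ∆ (B ∩ Ω)) ∩ K)
      ≤ volume ((A i ∆ B) ∩ C) + volume ((Ω ∩ closure K) \ C) :=
        (measure_mono hsub).trans (measure_union_le _ _)
    _ ≤ ε / 2 + ε / 2 := add_le_add (hN i hi) hCε.le
    _ = ε := ENNReal.add_halves ε

/-- Proposition 2.12, compactness: a sequence of sets whose local fractional
perimeters are asymptotically bounded in every compactly contained open subset of `Ω` admits a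
subsequence converging locally in measure inside `Ω`. -/
theorem fracPer_compactness
    (n : ℕ) (hn : 1 ≤ n) (s : ℝ) (hs : s ∈ Set.Ioo (0 : ℝ) 1)
    (Ω : Set (EuclideanSpace ℝ (Fin n))) (hΩ : IsOpen Ω)
    (Eh : ℕ → Set (EuclideanSpace ℝ (Fin n))) (hEh : ∀ h, MeasurableSet (Eh h))
    (hbd : ∀ Ω' : Set (EuclideanSpace ℝ (Fin n)), IsOpen Ω' → IsCompact (closure Ω') →
      closure Ω' ⊆ Ω → ∃ c : ℝ≥0∞, c < ⊤ ∧
        Filter.limsup (fun h => PsL n s (Eh h) Ω') atTop ≤ c) :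
    ∃ (φ : ℕ → ℕ), StrictMono φ ∧
      ∃ E : Set (EuclideanSpace ℝ (Fin n)), MeasurableSet E ∧
        LocConv n (fun i => Eh (φ i) ∩ Ω) (E ∩ Ω) := by
  obtain ⟨ν, φ, hφ, hν⟩ := exists_subseq_tendsto_volume_inter_dyadicCube Eh
  set l := fun x => limsup (fun k => dyadicDensity n k (ν k) x) atTop
  have hl : Measurable l := Measurable.limsup fun k => measurable_dyadicDensity (ν k)
  refine ⟨φ, hφ, {x | 1 / 2 < l x}, measurableSet_lt measurable_const hl,
    locConv_inter_of_forall_isCompact hΩ fun C hC hCΩ => ?_⟩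
  obtain ⟨Ω', hΩ', hCΩ', hΩ'Ω, hΩ'c⟩ := exists_open_between_and_isCompact_closure hC hΩ hCΩ
  obtain ⟨c, hc, hlim⟩ := hbd Ω' hΩ' hΩ'c hΩ'Ω
  have hper : ∀ᶠ i in atTop, PsL n s (Eh (φ i)) Ω' ≤ c + 1 :=
    hφ.tendsto_atTop.eventually <| (eventually_lt_of_limsup_lt
      (hlim.trans_lt (ENNReal.lt_add_right hc.ne one_ne_zero))).mono fun _ => le_of_lt
  have hL1 := tendsto_setLIntegral_ennDist_indicator_limsup_dyadicDensity hn hs.1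
    (fun i => hEh (φ i)) hν hC hΩ' hCΩ' (ENNReal.add_ne_top.2 ⟨hc.ne, ENNReal.one_ne_top⟩) hper
  refine tendsto_of_tendsto_of_tendsto_of_le_of_le tendsto_const_nhds
    (by simpa using ENNReal.Tendsto.const_mul hL1 (Or.inr ENNReal.ofNat_ne_top))
    (fun _ => zero_le) fun i => measure_symmDiff_inter_le volume (hEh (φ i)) hl C
end
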